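/- arXiv:2412.02462 — 8 statements merged into one kernel-verified Lean document; each statement's English description precedes it below -/
import Mathlib

section
/- Let k be a nonnegative integer, let u > 0 and t ∈ (0,1), and suppose that G_k(u;t) := k!·Σ_{n≥0} u^{n−k}·t^{(n−k)²/2}/n! ≤ 2 (this series converges for all such u, t). Then for every q ∈ ℂ with 0 < |q| < t, setting r := u·|q|^{1/2−k}, the function x ↦ f(x;q) has no zeros on the circle |x| = r, its zero set inside the open disk |x| < r is finite, and the sum over this zero set of the analytic orders of vanishing of f(·;q) equals k. -/
/-- The deformed exponential function `f(x;q) = ∑_{n≥0} x^n q^(n(n-1)/2) / n!`. -/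
noncomputable def deformedExp (x q : ℂ) : ℂ :=
  ∑' n : ℕ, x ^ n * q ^ (n * (n - 1) / 2) / (n.factorial : ℂ)

/-- The analytic order of vanishing of `g` at `z` (junk value `0` if `g` is not analytic at `z`). -/
noncomputable def vanishingOrder (g : ℂ → ℂ) (z : ℂ) : ℕ∞ :=
  @dite _ (AnalyticAt ℂ g z) (Classical.dec _) (fun _ => analyticOrderAt g z) (fun _ => 0)

/-!
Write `p = ‖q‖`. On the circle `‖x‖ = r` the `n`-th term of the series has modulus
`u^k p^(-k²/2) · u^(n-k) p^((n-k)²/2) / n!`, since `(1/2 - k) n + n(n-1)/2 = ((n-k)² - k²)/2`.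
As `p < t`, these moduli add up to strictly less than `u^k p^(-k²/2) G_k(u;t) / k!`, which is at
most twice the modulus of the `k`-th term `c x^k`; so `c x^k` strictly dominates the rest of the
series on the circle, and Rouché's theorem gives `k` zeros in the disc, counted with multiplicity.
Rouché's theorem follows from the argument principle, proved by splitting off one linear factor
at a time, and from the fact that `log (f / g)` is a primitive of `f'/f - g'/g` on the circle when
`‖f - g‖ < ‖g‖` there.
-/

open Complex Metric Set Filter Topology
open scoped Real

theorem ne_zero_of_norm_sub_lt {E : Type*} [SeminormedAddCommGroup E] {a b : E}
    (h : ‖a - b‖ < ‖b‖) : a ≠ 0 := by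
  rintro rfl
  simp at h

section ArgumentPrinciple

variable {f g : ℂ → ℂ} {c : ℂ} {R : ℝ}

theorem circleIntegrable_logDeriv (hf : Differentiable ℂ f) (hR : 0 ≤ R)
    (hS : ∀ z ∈ sphere c R, f z ≠ 0) : CircleIntegrable (logDeriv f) c R :=
  ContinuousOn.circleIntegrable hR <|
    hf.deriv.continuous.continuousOn.div hf.continuous.continuousOn hS

theorem circleIntegral_logDeriv_eq_of_norm_sub_lt (hf : Differentiable ℂ f)
    (hg : Differentiable ℂ g) (hR : 0 ≤ R) (hlt : ∀ z ∈ sphere c R, ‖f z - g z‖ < ‖g z‖) :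
    ∮ z in C(c, R), logDeriv f z = ∮ z in C(c, R), logDeriv g z := by
  have hg0 : ∀ z ∈ sphere c R, g z ≠ 0 := fun z hz =>
    norm_pos_iff.1 ((norm_nonneg _).trans_lt (hlt z hz))
  have hf0 : ∀ z ∈ sphere c R, f z ≠ 0 := fun z hz => ne_zero_of_norm_sub_lt (hlt z hz)
  rw [← sub_eq_zero, ← circleIntegral.integral_sub (circleIntegrable_logDeriv hf hR hf0)
    (circleIntegrable_logDeriv hg hR hg0)]
  refine circleIntegral.integral_eq_zero_of_hasDerivWithinAt (f := fun z => log (f z / g z)) hR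
    fun z hz => ?_
  have hslit : f z / g z ∈ slitPlane := by
    apply ball_one_subset_slitPlane
    rw [mem_ball, dist_eq, div_sub_one (hg0 z hz), norm_div]
    exact (div_lt_one (norm_pos_iff.2 (hg0 z hz))).2 (hlt z hz)
  have hquot : HasDerivAt (fun w => f w / g w) (deriv (fun w => f w / g w) z) z :=
    ((hf z).div (hg z) (hg0 z hz)).hasDerivAt
  refine (hquot.clog hslit).hasDerivWithinAt.congr_deriv ?_
  rw [← logDeriv_div z (hf0 z hz) (hg0 z hz) (hf z) (hg z), logDeriv_apply]

theorem Differentiable.analyticOrderAt_ne_top (hf : Differentiable ℂ f) {w : ℂ} (hw : f w ≠ 0)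
    (z : ℂ) : analyticOrderAt f z ≠ ⊤ := by
  rw [Ne, AnalyticOnNhd.analyticOrderAt_eq_top_iff_eq_zero z hf.analyticAt]
  exact fun h => hw (congrFun h w)

theorem Differentiable.analyticOrderNatAt_eq_zero_iff (hf : Differentiable ℂ f) {w : ℂ}
    (hw : f w ≠ 0) (z : ℂ) : analyticOrderNatAt f z = 0 ↔ f z ≠ 0 := by
  rw [← Nat.cast_inj (R := ℕ∞), Nat.cast_analyticOrderNatAt (hf.analyticOrderAt_ne_top hw z),
    Nat.cast_zero, analyticOrderAt_eq_zero]
  simp [hf.analyticAt z]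

theorem analyticOrderNatAt_sub_const (u v : ℂ) :
    analyticOrderNatAt (· - u) v = if v = u then 1 else 0 := by
  split_ifs with h
  · simp [analyticOrderNatAt, h]
  · simp [analyticOrderNatAt, h]

theorem Differentiable.analyticOrderNatAt_sub_mul (hg : Differentiable ℂ g) {w : ℂ}
    (hw : g w ≠ 0) (u v : ℂ) :
    analyticOrderNatAt ((· - u) * g) v = (if v = u then 1 else 0) + analyticOrderNatAt g v := by
  have hlin : Differentiable ℂ (· - u : ℂ → ℂ) := by fun_prop
  rw [analyticOrderNatAt_mul (hlin.analyticAt v) (hg.analyticAt v)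
    (hlin.analyticOrderAt_ne_top (w := u + 1) (by simp) v) (hg.analyticOrderAt_ne_top hw v),
    analyticOrderNatAt_sub_const]

theorem circleIntegral_logDeriv_sub_mul (hg : Differentiable ℂ g) (hR : 0 ≤ R)
    (hS : ∀ z ∈ sphere c R, g z ≠ 0) {u : ℂ} (hu : u ∈ ball c R) :
    ∮ z in C(c, R), logDeriv ((· - u) * g) z = 2 * π * I + ∮ z in C(c, R), logDeriv g z := by
  have hzu : ∀ z ∈ sphere c R, z - u ≠ 0 := fun z hz h =>
    (mem_sphere.1 hz).not_lt (sub_eq_zero.1 h ▸ mem_ball.1 hu)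
  have hfS : ∀ z ∈ sphere c R, ((· - u) * g) z ≠ 0 := fun z hz => mul_ne_zero (hzu z hz) (hS z hz)
  have hlog : EqOn (fun z => logDeriv ((· - u) * g) z - logDeriv g z) (fun z => (z - u)⁻¹)
      (sphere c R) := by
    intro z hz
    rw [show (· - u) * g = fun z => (z - u) * g z from rfl]
    beta_reduce
    rw [logDeriv_mul (f := (· - u)) z (hzu z hz) (hS z hz) (by fun_prop) (hg z)]
    simp [logDeriv_apply]
  rw [← sub_eq_iff_eq_add, ← circleIntegral.integral_sub
    (circleIntegrable_logDeriv (by fun_prop) hR hfS) (circleIntegrable_logDeriv hg hR hS),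
    circleIntegral.integral_congr hR hlog, circleIntegral.integral_sub_inv_of_mem_ball hu]

theorem Differentiable.dslope (hf : Differentiable ℂ f) (u : ℂ) : Differentiable ℂ (dslope f u) :=
  differentiableOn_univ.1 <| (Complex.differentiableOn_dslope univ_mem).2 hf.differentiableOn

theorem circleIntegral_logDeriv_eq_sum_analyticOrderNatAt (hf : Differentiable ℂ f) (hR : 0 < R)
    (hS : ∀ z ∈ sphere c R, f z ≠ 0) {s : Finset ℂ} (hs : ↑s ⊆ ball c R)
    (hzeros : ∀ z ∈ ball c R, f z = 0 → z ∈ s) :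
    ∮ z in C(c, R), logDeriv f z = 2 * π * I * ∑ u ∈ s, analyticOrderNatAt f u := by
  obtain ⟨w, hw⟩ : ∃ w, w ∈ sphere c R := NormedSpace.sphere_nonempty.2 hR.le
  obtain ⟨N, hN⟩ : ∃ N, ∑ u ∈ s, analyticOrderNatAt f u = N := ⟨_, rfl⟩
  rw [hN]
  induction N generalizing f with
  | zero =>
    have hnz : ∀ z ∈ closedBall c R, f z ≠ 0 := by
      intro z hz hfz
      rcases (mem_closedBall.1 hz).lt_or_eq with hlt | heq
      · exact (hf.analyticOrderNatAt_eq_zero_iff (hS w hw) z).1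
          (Finset.sum_eq_zero_iff.1 hN z (hzeros z hlt hfz)) hfz
      · exact hS z heq hfz
    rw [Nat.cast_zero, mul_zero]
    refine DiffContOnCl.circleIntegral_eq_zero hR.le (DifferentiableOn.diffContOnCl ?_)
    rw [closure_ball c hR.ne']
    exact hf.deriv.differentiableOn.div hf.differentiableOn hnz
  | succ N ih =>
    obtain ⟨u, hus, hu⟩ : ∃ u ∈ s, analyticOrderNatAt f u ≠ 0 := by
      by_contra! h
      simp [Finset.sum_eq_zero h] at hN
    set g := dslope f u
    have hg : Differentiable ℂ g := hf.dslope u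
    have hfg : f = (· - u) * g :=
      funext fun z =>
        (sub_smul_dslope_of_zero (apply_eq_zero_of_analyticOrderNatAt_ne_zero hu) z).symm
    have hgS : ∀ z ∈ sphere c R, g z ≠ 0 := fun z hz h => hS z hz (by simp [hfg, h])
    have hgzeros : ∀ z ∈ ball c R, g z = 0 → z ∈ s := fun z hz h => hzeros z hz (by simp [hfg, h])
    have hNg : ∑ v ∈ s, analyticOrderNatAt g v = N := by
      simp only [hfg, hg.analyticOrderNatAt_sub_mul (hgS w hw), Finset.sum_add_distrib,
        Finset.sum_ite_eq', if_pos hus] at hN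
      omega
    rw [hfg, circleIntegral_logDeriv_sub_mul hg hR.le hgS (hs hus), ih hg hgS hgzeros hNg]
    push_cast
    ring

theorem Differentiable.finite_inter_zeros (hf : Differentiable ℂ f) {w : ℂ} (hw : f w ≠ 0)
    {K : Set ℂ} (hK : IsCompact K) : (K ∩ f ⁻¹' {0}).Finite := by
  have hcod : f ⁻¹' {0}ᶜ ∈ codiscreteWithin K :=
    codiscreteWithin_mono (subset_univ K)
      (AnalyticOnNhd.preimage_zero_mem_codiscrete (fun z _ => hf.analyticAt z) hw)
  simpa [sdiff_eq] using hK.finite_sdiff_of_mem_codiscreteWithin hcod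

theorem circleIntegral_logDeriv_const_mul_pow {C : ℂ} (hC : C ≠ 0) (k : ℕ) (hR : R ≠ 0) :
    ∮ z in C(0, R), logDeriv (fun z => C * z ^ k) z = 2 * π * I * k := by
  have h (z : ℂ) : logDeriv (fun z => C * z ^ k) z = k * (z - 0)⁻¹ := by
    rw [logDeriv_const_mul z C hC, logDeriv_pow, sub_zero, div_eq_mul_inv]
  simp only [h, circleIntegral.integral_const_mul, circleIntegral.integral_sub_center_inv 0 hR]
  ring

theorem sum_analyticOrderNatAt_eq_of_norm_sub_const_mul_pow_lt (hf : Differentiable ℂ f)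
    (hR : 0 < R) {C : ℂ} (hC : C ≠ 0) {k : ℕ}
    (hlt : ∀ z ∈ sphere 0 R, ‖f z - C * z ^ k‖ < ‖C * z ^ k‖) {s : Finset ℂ}
    (hs : ↑s ⊆ ball (0 : ℂ) R) (hzeros : ∀ z ∈ ball 0 R, f z = 0 → z ∈ s) :
    ∑ u ∈ s, analyticOrderNatAt f u = k := by
  have h := circleIntegral_logDeriv_eq_sum_analyticOrderNatAt hf hR
    (fun z hz => ne_zero_of_norm_sub_lt (hlt z hz)) hs hzeros
  rw [circleIntegral_logDeriv_eq_of_norm_sub_lt hf (by fun_prop) hR.le hlt,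
    circleIntegral_logDeriv_const_mul_pow hC k hR.ne'] at h
  exact_mod_cast mul_left_cancel₀ (by simp [Real.pi_ne_zero, I_ne_zero]) h.symm

end ArgumentPrinciple

theorem norm_tsum_sub_lt_of_tsum_norm_lt {ι E : Type*} [NormedAddCommGroup E] [CompleteSpace E]
    [DecidableEq ι] {a : ι → E} (ha : Summable (‖a ·‖)) (i : ι) (h : ∑' n, ‖a n‖ < 2 * ‖a i‖) :
    ‖∑' n, a n - a i‖ < ‖a i‖ := by
  have hite : Summable (fun n => ‖if n = i then 0 else a n‖) :=
    ha.of_nonneg_of_le (fun _ => norm_nonneg _) fun n => by split_ifs <;> simp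
  calc ‖∑' n, a n - a i‖ = ‖∑' n, if n = i then 0 else a n‖ := by
        rw [ha.of_norm.tsum_eq_add_tsum_ite i, add_sub_cancel_left]
    _ ≤ ∑' n, ‖if n = i then 0 else a n‖ := norm_tsum_le_tsum_norm hite
    _ = ∑' n, ‖a n‖ - ‖a i‖ := by
        rw [ha.tsum_eq_add_tsum_ite i, add_sub_cancel_left]
        congr 1 with n
        split_ifs <;> simp
    _ < ‖a i‖ := by linarith

theorem differentiable_deformedExp {q : ℂ} (hq : ‖q‖ ≤ 1) :
    Differentiable ℂ (deformedExp · q) := by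
  intro x
  have hU : ball (0 : ℂ) (‖x‖ + 1) ∈ 𝓝 x := isOpen_ball.mem_nhds (by simp)
  refine (differentiableOn_tsum_of_summable_norm
    (Real.summable_pow_div_factorial (‖x‖ + 1)) (fun n => by fun_prop) isOpen_ball
    fun n w hw => ?_).differentiableAt hU
  rw [mem_ball_zero_iff] at hw
  rw [norm_div, norm_mul, norm_pow, norm_pow, Complex.norm_natCast]
  gcongr
  calc ‖w‖ ^ n * ‖q‖ ^ (n * (n - 1) / 2) ≤ ‖w‖ ^ n * 1 := by
        gcongr
        exact pow_le_one₀ (norm_nonneg q) hq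
    _ ≤ (‖x‖ + 1) ^ n := by rw [mul_one]; gcongr

/-- `k! * ∑' n, gaussTerm k u t n` is the series `G_k(u;t)` of the hypothesis. -/
noncomputable def gaussTerm (k : ℕ) (u s : ℝ) (n : ℕ) : ℝ :=
  u ^ ((n : ℤ) - (k : ℤ)) * s ^ ((((n : ℝ) - (k : ℝ)) ^ 2) / 2) / (n.factorial : ℝ)

section gaussTerm

variable {k : ℕ} {u s t : ℝ}

theorem gaussTerm_self : gaussTerm k u s k = 1 / k.factorial := by
  simp [gaussTerm]

theorem gaussTerm_nonneg (hu : 0 ≤ u) (hs : 0 ≤ s) (n : ℕ) : 0 ≤ gaussTerm k u s n := by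
  unfold gaussTerm; positivity

theorem gaussTerm_le_gaussTerm (hu : 0 ≤ u) (hs : 0 ≤ s) (hst : s ≤ t) (n : ℕ) :
    gaussTerm k u s n ≤ gaussTerm k u t n := by
  unfold gaussTerm; gcongr

theorem gaussTerm_lt_gaussTerm (hu : 0 < u) (hs : 0 ≤ s) (hst : s < t) {n : ℕ} (hn : n ≠ k) :
    gaussTerm k u s n < gaussTerm k u t n := by
  have hnk : ((n : ℝ) - k) ^ 2 / 2 ≠ 0 := by
    simpa [sub_eq_zero] using hn
  unfold gaussTerm
  gcongr

theorem summable_gaussTerm (hu : 0 < u) (hs : 0 ≤ s) (hs1 : s ≤ 1) :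
    Summable (gaussTerm k u s) := by
  refine Summable.of_nonneg_of_le (gaussTerm_nonneg hu.le hs) (fun n => ?_)
    ((Real.summable_pow_div_factorial u).mul_left (u ^ (-(k : ℤ))))
  have hsplit : u ^ ((n : ℤ) - k) = u ^ (-(k : ℤ)) * u ^ n := by
    rw [sub_eq_neg_add, zpow_add₀ hu.ne', zpow_natCast]
  calc gaussTerm k u s n ≤ u ^ ((n : ℤ) - k) * 1 / n.factorial := by
        unfold gaussTerm
        gcongr
        exact Real.rpow_le_one hs hs1 (by positivity)
    _ = u ^ (-(k : ℤ)) * (u ^ n / n.factorial) := by rw [hsplit]; ring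

end gaussTerm

theorem Nat.cast_mul_sub_one_div_two (n : ℕ) : ((n * (n - 1) / 2 : ℕ) : ℝ) = n * (n - 1) / 2 := by
  rw [Nat.cast_div (Nat.even_mul_pred_self n).two_dvd two_ne_zero]
  cases n <;> push_cast [Nat.add_sub_cancel] <;> ring

theorem norm_deformedExp_term {k : ℕ} {u : ℝ} (hu : 0 < u) {x q : ℂ} (hq : q ≠ 0)
    (hx : ‖x‖ = u * ‖q‖ ^ ((1 : ℝ) / 2 - k)) (n : ℕ) :
    ‖x ^ n * q ^ (n * (n - 1) / 2) / (n.factorial : ℂ)‖ =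
      u ^ k * ‖q‖ ^ (-(k : ℝ) ^ 2 / 2) * gaussTerm k u ‖q‖ n := by
  have hp : 0 < ‖q‖ := norm_pos_iff.2 hq
  rw [norm_div, norm_mul, norm_pow, norm_pow, hx, Complex.norm_natCast, gaussTerm, mul_pow,
    ← Real.rpow_natCast ‖q‖, Nat.cast_mul_sub_one_div_two, ← Real.rpow_natCast (‖q‖ ^ _),
    ← Real.rpow_mul hp.le, ← Real.rpow_natCast u, ← Real.rpow_natCast u, ← Real.rpow_intCast]
  simp only [Real.rpow_def_of_pos hu, Real.rpow_def_of_pos hp, ← Real.exp_add, mul_div_assoc']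
  congr 2
  push_cast
  ring

theorem norm_deformedExp_sub_lt {k : ℕ} {u t : ℝ} (hu : 0 < u) (ht : t ≤ 1)
    (hG : (k.factorial : ℝ) * ∑' n, gaussTerm k u t n ≤ 2) {q : ℂ} (hq : q ≠ 0)
    (hqt : ‖q‖ < t) {x : ℂ} (hx : ‖x‖ = u * ‖q‖ ^ ((1 : ℝ) / 2 - k)) :
    ‖deformedExp x q - q ^ (k * (k - 1) / 2) / k.factorial * x ^ k‖ <
      ‖q ^ (k * (k - 1) / 2) / k.factorial * x ^ k‖ := by
  set a : ℕ → ℂ := fun n => x ^ n * q ^ (n * (n - 1) / 2) / n.factorial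
  set A := u ^ k * ‖q‖ ^ (-(k : ℝ) ^ 2 / 2)
  have hA : 0 < A := by positivity
  have hnorm : ∀ n, ‖a n‖ = A * gaussTerm k u ‖q‖ n := norm_deformedExp_term hu hq hx
  have hsum_q := summable_gaussTerm (k := k) hu (norm_nonneg q) (hqt.le.trans ht)
  have hlt : ∑' n, gaussTerm k u ‖q‖ n < ∑' n, gaussTerm k u t n :=
    Summable.tsum_lt_tsum (gaussTerm_le_gaussTerm hu.le (norm_nonneg q) hqt.le)
      (gaussTerm_lt_gaussTerm hu (norm_nonneg q) hqt k.succ_ne_self) hsum_q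
      (summable_gaussTerm hu ((norm_nonneg q).trans hqt.le) ht)
  rw [show q ^ (k * (k - 1) / 2) / k.factorial * x ^ k = a k by ring]
  refine norm_tsum_sub_lt_of_tsum_norm_lt ((hsum_q.mul_left A).congr fun n => (hnorm n).symm) k ?_
  have hk : (0 : ℝ) < k.factorial := by positivity
  calc ∑' n, ‖a n‖ = A * ∑' n, gaussTerm k u ‖q‖ n := by simp only [hnorm, tsum_mul_left]
    _ < A * (2 / k.factorial) := by
        gcongr
        rw [lt_div_iff₀ hk]
        linarith [mul_lt_mul_of_pos_right hlt hk]
    _ = 2 * ‖a k‖ := by rw [hnorm, gaussTerm_self]; ring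

theorem Differentiable.vanishingOrder_eq {f : ℂ → ℂ} (hf : Differentiable ℂ f) {w : ℂ}
    (hw : f w ≠ 0) (z : ℂ) : vanishingOrder f z = analyticOrderNatAt f z := by
  rw [vanishingOrder, dif_pos (hf.analyticAt z),
    Nat.cast_analyticOrderNatAt (hf.analyticOrderAt_ne_top hw z)]

theorem stmt0 (k : ℕ) (u t : ℝ) (hu : 0 < u) (ht : t ∈ Set.Ioo (0 : ℝ) 1)
    (hG : (k.factorial : ℝ) *
        ∑' n : ℕ, u ^ ((n : ℤ) - (k : ℤ)) * t ^ ((((n : ℝ) - (k : ℝ)) ^ 2) / 2)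
          / (n.factorial : ℝ) ≤ 2)
    (q : ℂ) (hq0 : q ≠ 0) (hqt : ‖q‖ < t) :
    ∀ r : ℝ, r = u * ‖q‖ ^ ((1 : ℝ) / 2 - (k : ℝ)) →
      (∀ x : ℂ, ‖x‖ = r → deformedExp x q ≠ 0) ∧
      ∃ hfin : {x : ℂ | ‖x‖ < r ∧ deformedExp x q = 0}.Finite,
        ∑ x ∈ hfin.toFinset, vanishingOrder (fun y => deformedExp y q) x = (k : ℕ∞) := by
  intro r hr
  have hr0 : 0 < r := hr ▸ mul_pos hu (Real.rpow_pos_of_pos (norm_pos_iff.2 hq0) _)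
  have hf : Differentiable ℂ (deformedExp · q) := differentiable_deformedExp (hqt.trans ht.2).le
  have hlt (x : ℂ) (hx : x ∈ sphere 0 r) :
      ‖deformedExp x q - q ^ (k * (k - 1) / 2) / k.factorial * x ^ k‖ <
        ‖q ^ (k * (k - 1) / 2) / k.factorial * x ^ k‖ :=
    norm_deformedExp_sub_lt hu ht.2.le hG hq0 hqt (by rwa [← hr, ← mem_sphere_zero_iff_norm])
  have hS : ∀ x ∈ sphere 0 r, deformedExp x q ≠ 0 := fun x hx => ne_zero_of_norm_sub_lt (hlt x hx)
  have hr_ne : deformedExp r q ≠ 0 := hS r (by simp [hr0.le])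
  have hfin : {x : ℂ | ‖x‖ < r ∧ deformedExp x q = 0}.Finite :=
    (hf.finite_inter_zeros hr_ne (isCompact_closedBall 0 r)).subset
      fun x hx => ⟨mem_closedBall_zero_iff.2 hx.1.le, hx.2⟩
  refine ⟨fun x hx => hS x (mem_sphere_zero_iff_norm.2 hx), hfin, ?_⟩
  rw [Finset.sum_congr rfl fun x _ => hf.vanishingOrder_eq hr_ne x, ← Nat.cast_sum,
    sum_analyticOrderNatAt_eq_of_norm_sub_const_mul_pow_lt hf hr0
      (by simp [hq0, Nat.factorial_ne_zero]) hlt]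
  · intro x hx
    simpa using (hfin.mem_toFinset.1 hx).1
  · intro x hx h
    simpa [hfin.mem_toFinset] using ⟨mem_ball_zero_iff.1 hx, h⟩
end

section
/- Let q ∈ ℂ with 0 < |q| < 0.44175. Then f(x;q) ≠ 0 for every x ∈ ℂ with |x| ≤ 1.25·|q|^{1/2}, and there exists a unique x ∈ ℂ with |x| < 1.26·|q|^{−1/2} and f(x;q) = 0; consequently this unique zero x₁(q) satisfies 1.25·|q|^{1/2} < |x₁(q)| < 1.26·|q|^{−1/2}. -/
open Finset Set
open scoped Nat

theorem le_geometric_of_succ_le_half {a : ℕ → ℝ} {N : ℕ}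
    (h : ∀ n, N ≤ n → a (n + 1) ≤ a n / 2) (n : ℕ) : a (n + N) ≤ a N * (1 / 2) ^ n := by
  induction n with
  | zero => simp
  | succ n ih =>
    calc a (n + 1 + N) = a (n + N + 1) := by rw [Nat.add_right_comm]
      _ ≤ a (n + N) / 2 := h _ (Nat.le_add_left N n)
      _ ≤ a N * (1 / 2) ^ (n + 1) := by rw [pow_succ]; linarith

theorem summable_of_succ_le_half {a : ℕ → ℝ} {N : ℕ} (h₀ : ∀ n, 0 ≤ a n)
    (h : ∀ n, N ≤ n → a (n + 1) ≤ a n / 2) : Summable a :=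
  (summable_nat_add_iff N).1 <| summable_geometric_two.mul_left (a N) |>.of_nonneg_of_le
    (fun _ => h₀ _) (le_geometric_of_succ_le_half h)

theorem tsum_le_of_succ_le_half {a : ℕ → ℝ} {N : ℕ} (h₀ : ∀ n, 0 ≤ a n)
    (h : ∀ n, N ≤ n → a (n + 1) ≤ a n / 2) :
    ∑' n, a n ≤ ∑ i ∈ range N, a i + 2 * a N := by
  have hs := summable_of_succ_le_half h₀ h
  have htail : ∑' n, a (n + N) ≤ ∑' n : ℕ, a N * (1 / 2) ^ n :=
    ((summable_nat_add_iff N).2 hs).tsum_le_tsum (le_geometric_of_succ_le_half h)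
      (summable_geometric_two.mul_left _)
  rw [tsum_mul_left, tsum_geometric_two] at htail
  rw [← hs.sum_add_tsum_nat_add N]
  linarith

theorem norm_pow_sub_pow_le {R : Type*} [NormedCommRing R] [NormOneClass R] {x y : R} {ρ : ℝ}
    (hx : ‖x‖ ≤ ρ) (hy : ‖y‖ ≤ ρ) (m : ℕ) : ‖x ^ m - y ^ m‖ ≤ m * ρ ^ (m - 1) * ‖x - y‖ := by
  rw [← geom_sum₂_mul]
  refine (norm_mul_le _ _).trans (mul_le_mul_of_nonneg_right ?_ (norm_nonneg _))
  calc ‖∑ i ∈ range m, x ^ i * y ^ (m - 1 - i)‖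
      ≤ ∑ i ∈ range m, ‖x‖ ^ i * ‖y‖ ^ (m - 1 - i) :=
        (norm_sum_le _ _).trans <| sum_le_sum fun i _ =>
          (norm_mul_le _ _).trans (mul_le_mul (norm_pow_le _ _) (norm_pow_le _ _) (norm_nonneg _)
            (by positivity))
    _ ≤ ∑ _i ∈ range m, ρ ^ (m - 1) := sum_le_sum fun i hi => by
        rw [← pow_mul_pow_sub ρ (Nat.le_sub_one_of_lt (mem_range.1 hi))]
        have hρ : 0 ≤ ρ := (norm_nonneg x).trans hx
        gcongr
    _ = m * ρ ^ (m - 1) := by simp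

namespace DeformedExp

variable {x y q : ℂ} {ρ t : ℝ}

noncomputable def term (x q : ℂ) (n : ℕ) : ℂ := x ^ n * q ^ (n * (n - 1) / 2) / n !

theorem norm_term (x q : ℂ) (n : ℕ) :
    ‖term x q n‖ = ‖x‖ ^ n * ‖q‖ ^ (n * (n - 1) / 2) / n ! := by
  simp [term]

theorem summable_term (x : ℂ) (hq : ‖q‖ ≤ 1) : Summable (term x q) := by
  refine .of_norm_bounded (Real.summable_pow_div_factorial ‖x‖) fun n => ?_
  rw [norm_term]
  gcongr
  exact mul_le_of_le_one_right (by positivity) (pow_le_one₀ (norm_nonneg q) hq)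

noncomputable def tail (x q : ℂ) : ℂ := ∑' n, term x q (n + 2)

theorem deformedExp_eq_one_add_add_tail (x : ℂ) (hq : ‖q‖ ≤ 1) :
    deformedExp x q = 1 + x + tail x q := by
  rw [show deformedExp x q = ∑' n, term x q n from rfl,
    ← (summable_term x hq).sum_add_tsum_nat_add 2]
  simp [sum_range_succ, term, tail]

/-- `majorant ρ t k n` dominates the `(n + 2)`-th term of the tail (`k = 2`) and of its
difference quotient (`k = 1`) for `‖x‖ ≤ ρ`, `‖q‖ = t`. -/
noncomputable def majorant (ρ t : ℝ) (k n : ℕ) : ℝ :=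
  ρ ^ (n + k) * t ^ ((n + 2) * (n + 1) / 2) / (n + k)!

theorem majorant_nonneg (hρ : 0 ≤ ρ) (ht : 0 ≤ t) (k n : ℕ) : 0 ≤ majorant ρ t k n := by
  unfold majorant; positivity

theorem majorant_succ (ρ t : ℝ) (k n : ℕ) :
    majorant ρ t k (n + 1) = majorant ρ t k n * (ρ * t ^ (n + 2)) / (n + k + 1) := by
  have he : (n + 1 + 2) * (n + 1 + 1) / 2 = (n + 2) * (n + 1) / 2 + (n + 2) := by
    rw [show (n + 1 + 2) * (n + 1 + 1) = (n + 2) * (n + 1) + (n + 2) * 2 by ring,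
      Nat.add_mul_div_right _ _ two_pos]
  rw [majorant, majorant, he, show n + 1 + k = n + k + 1 by ring, Nat.factorial_succ, pow_add,
    pow_succ]
  push_cast
  field_simp
  ring

theorem majorant_succ_le_half (hρ : 0 ≤ ρ) (ht₀ : 0 ≤ t) (ht₁ : t ≤ 1) (hρt : ρ * t ^ 6 ≤ 1)
    (k : ℕ) {n : ℕ} (hn : 4 ≤ n) : majorant ρ t k (n + 1) ≤ majorant ρ t k n / 2 := by
  have hratio : ρ * t ^ (n + 2) ≤ 1 :=
    (mul_le_mul_of_nonneg_left (pow_le_pow_of_le_one ht₀ ht₁ (by omega)) hρ).trans hρt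
  have hm := majorant_nonneg hρ ht₀ k n
  have hnk : (2 : ℝ) ≤ n + k + 1 := by
    have : (4 : ℝ) ≤ n := by exact_mod_cast hn
    linarith [(k.cast_nonneg : (0 : ℝ) ≤ k)]
  rw [majorant_succ, div_le_div_iff₀ (by positivity) two_pos]
  nlinarith [mul_le_of_le_one_right hm hratio]

theorem summable_majorant (hρ : 0 ≤ ρ) (ht₀ : 0 ≤ t) (ht₁ : t ≤ 1) (hρt : ρ * t ^ 6 ≤ 1)
    (k : ℕ) : Summable (majorant ρ t k) :=
  summable_of_succ_le_half (majorant_nonneg hρ ht₀ k)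
    fun _ => majorant_succ_le_half hρ ht₀ ht₁ hρt k

theorem tsum_majorant_le (hρ : 0 ≤ ρ) (ht₀ : 0 ≤ t) (ht₁ : t ≤ 1) (hρt : ρ * t ^ 6 ≤ 1)
    (k : ℕ) : ∑' n, majorant ρ t k n ≤ ∑ i ∈ range 4, majorant ρ t k i + 2 * majorant ρ t k 4 :=
  tsum_le_of_succ_le_half (majorant_nonneg hρ ht₀ k)
    fun _ => majorant_succ_le_half hρ ht₀ ht₁ hρt k

noncomputable def tailBound (ρ t : ℝ) : ℝ :=
  t * ρ ^ 2 / 2 + t ^ 3 * ρ ^ 3 / 6 + t ^ 6 * ρ ^ 4 / 24 + t ^ 10 * ρ ^ 5 / 120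
    + t ^ 15 * ρ ^ 6 / 360

noncomputable def tailLipBound (ρ t : ℝ) : ℝ :=
  t * ρ + t ^ 3 * ρ ^ 2 / 2 + t ^ 6 * ρ ^ 3 / 6 + t ^ 10 * ρ ^ 4 / 24 + t ^ 15 * ρ ^ 5 / 60

theorem sum_majorant_two (ρ t : ℝ) :
    ∑ i ∈ range 4, majorant ρ t 2 i + 2 * majorant ρ t 2 4 = tailBound ρ t := by
  simp [sum_range_succ, majorant, tailBound, Nat.factorial]
  ring

theorem sum_majorant_one (ρ t : ℝ) :
    ∑ i ∈ range 4, majorant ρ t 1 i + 2 * majorant ρ t 1 4 = tailLipBound ρ t := by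
  simp [sum_range_succ, majorant, tailLipBound, Nat.factorial]
  ring

theorem norm_tail_le (hx : ‖x‖ ≤ ρ) (hq : ‖q‖ ≤ 1) (hρq : ρ * ‖q‖ ^ 6 ≤ 1) :
    ‖tail x q‖ ≤ tailBound ρ ‖q‖ := by
  have hρ : 0 ≤ ρ := (norm_nonneg x).trans hx
  have hterm : ∀ n, ‖term x q (n + 2)‖ ≤ majorant ρ ‖q‖ 2 n := fun n => by
    rw [norm_term, majorant, show n + 2 - 1 = n + 1 from rfl]
    gcongr
  calc ‖tail x q‖ ≤ ∑' n, majorant ρ ‖q‖ 2 n :=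
        tsum_of_norm_bounded (summable_majorant hρ (norm_nonneg q) hq hρq 2).hasSum hterm
    _ ≤ tailBound ρ ‖q‖ := by
      rw [← sum_majorant_two]; exact tsum_majorant_le hρ (norm_nonneg q) hq hρq 2

theorem norm_term_sub_term_le (hx : ‖x‖ ≤ ρ) (hy : ‖y‖ ≤ ρ) (n : ℕ) :
    ‖term x q (n + 2) - term y q (n + 2)‖ ≤ majorant ρ ‖q‖ 1 n * ‖x - y‖ := by
  have hρ : 0 ≤ ρ := (norm_nonneg x).trans hx
  have hsub : term x q (n + 2) - term y q (n + 2)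
      = (x ^ (n + 2) - y ^ (n + 2)) * q ^ ((n + 2) * (n + 1) / 2) / (n + 2)! := by
    change x ^ (n + 2) * q ^ ((n + 2) * (n + 1) / 2) / ((n + 2)! : ℂ)
      - y ^ (n + 2) * q ^ ((n + 2) * (n + 1) / 2) / ((n + 2)! : ℂ) = _
    ring
  have hfac : ((n + 2)! : ℝ) = (n + 2) * (n + 1)! := by push_cast [Nat.factorial_succ]; ring
  rw [hsub, norm_div, norm_mul, norm_pow, Complex.norm_natCast, majorant, hfac]
  calc ‖x ^ (n + 2) - y ^ (n + 2)‖ * ‖q‖ ^ ((n + 2) * (n + 1) / 2) / ((n + 2) * (n + 1)!)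
      ≤ (n + 2) * ρ ^ (n + 1) * ‖x - y‖ * ‖q‖ ^ ((n + 2) * (n + 1) / 2) / ((n + 2) * (n + 1)!) := by
        gcongr
        exact_mod_cast norm_pow_sub_pow_le hx hy (n + 2)
    _ = _ := by field_simp

theorem norm_tail_sub_tail_le (hx : ‖x‖ ≤ ρ) (hy : ‖y‖ ≤ ρ) (hq : ‖q‖ ≤ 1)
    (hρq : ρ * ‖q‖ ^ 6 ≤ 1) : ‖tail x q - tail y q‖ ≤ tailLipBound ρ ‖q‖ * ‖x - y‖ := by
  have hρ : 0 ≤ ρ := (norm_nonneg x).trans hx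
  have hs := summable_majorant hρ (norm_nonneg q) hq hρq 1
  rw [tail, tail, ← ((summable_nat_add_iff 2).2 (summable_term x hq)).tsum_sub
    ((summable_nat_add_iff 2).2 (summable_term y hq))]
  calc ‖∑' n, (term x q (n + 2) - term y q (n + 2))‖ ≤ (∑' n, majorant ρ ‖q‖ 1 n) * ‖x - y‖ :=
        tsum_of_norm_bounded (hs.hasSum.mul_right _) (norm_term_sub_term_le hx hy)
    _ ≤ tailLipBound ρ ‖q‖ * ‖x - y‖ := by
      rw [← sum_majorant_one]
      gcongr
      exact tsum_majorant_le hρ (norm_nonneg q) hq hρq 1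

theorem monotoneOn_tailBound (hρ : 0 ≤ ρ) : MonotoneOn (tailBound ρ) (Ici 0) :=
  fun t (ht : 0 ≤ t) _ _ htt' => by unfold tailBound; gcongr

theorem monotoneOn_tailLipBound (hρ : 0 ≤ ρ) : MonotoneOn (tailLipBound ρ) (Ici 0) :=
  fun t (ht : 0 ≤ t) _ _ htt' => by unfold tailLipBound; gcongr

theorem convexOn_tailBound (ht : 0 ≤ t) : ConvexOn ℝ (Ici 0) (tailBound · t) := by
  have h (n : ℕ) (c : ℝ) (hc : 0 ≤ c) : ConvexOn ℝ (Ici 0) (fun ρ : ℝ => c * ρ ^ n) :=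
    (convexOn_pow n).smul hc
  have hpoly : (tailBound · t) = fun ρ => t / 2 * ρ ^ 2 + t ^ 3 / 6 * ρ ^ 3 + t ^ 6 / 24 * ρ ^ 4
      + t ^ 10 / 120 * ρ ^ 5 + t ^ 15 / 360 * ρ ^ 6 := by
    ext ρ; unfold tailBound; ring
  rw [hpoly]
  exact ((((h 2 _ (by positivity)).add (h 3 _ (by positivity))).add (h 4 _ (by positivity))).add
    (h 5 _ (by positivity))).add (h 6 _ (by positivity))

theorem deformedExp_ne_zero_of_add_tailBound_lt (hq : ‖q‖ ≤ 1) (hρq : ρ * ‖q‖ ^ 6 ≤ 1)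
    (hx : ‖x‖ ≤ ρ) (hρ : ρ + tailBound ρ ‖q‖ < 1) : deformedExp x q ≠ 0 := by
  intro hzero
  have htail := norm_tail_le hx hq hρq
  have h : (1 : ℂ) = -x - tail x q := by
    linear_combination (deformedExp_eq_one_add_add_tail x hq).symm.trans hzero
  have := norm_sub_le (-x) (tail x q)
  rw [← h, norm_one, norm_neg] at this
  linarith

/-- A zero satisfies `‖x‖ ≤ 1 + tailBound ‖x‖ ‖q‖`, which by convexity of `tailBound` fails
on a whole interval `[a, b]` as soon as it fails at its endpoints. -/
theorem norm_lt_of_deformedExp_eq_zero_of_tailBound_lt {a b : ℝ} (ha : 0 ≤ a) (hq : ‖q‖ ≤ 1)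
    (hbq : b * ‖q‖ ^ 6 ≤ 1) (hta : tailBound a ‖q‖ < a - 1) (htb : tailBound b ‖q‖ < b - 1)
    (hx : ‖x‖ ≤ b) (hzero : deformedExp x q = 0) : ‖x‖ < a := by
  by_contra! hax
  have hxq : ‖x‖ * ‖q‖ ^ 6 ≤ 1 := (mul_le_mul_of_nonneg_right hx (by positivity)).trans hbq
  have h : x = -1 - tail x q := by
    linear_combination (deformedExp_eq_one_add_add_tail x hq).symm.trans hzero
  have hle : ‖x‖ ≤ 1 + tailBound ‖x‖ ‖q‖ := by
    calc ‖x‖ = ‖-1 - tail x q‖ := by rw [← h]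
      _ ≤ ‖(-1 : ℂ)‖ + ‖tail x q‖ := norm_sub_le _ _
      _ ≤ 1 + tailBound ‖x‖ ‖q‖ := by
        rw [norm_neg, norm_one]; gcongr; exact norm_tail_le le_rfl hq hxq
  have hconv := ((convexOn_tailBound (norm_nonneg q)).sub (concaveOn_id (convex_Ici 0))
    ).le_max_of_mem_Icc (mem_Ici.2 ha) (mem_Ici.2 (ha.trans (hax.trans hx))) ⟨hax, hx⟩
  simp only [Pi.sub_apply, id] at hconv
  have := max_lt (show tailBound a ‖q‖ - a < -1 by linarith)
    (show tailBound b ‖q‖ - b < -1 by linarith)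
  linarith

theorem eq_of_deformedExp_eq_zero_of_tailLipBound_lt (hq : ‖q‖ ≤ 1) (hρq : ρ * ‖q‖ ^ 6 ≤ 1)
    (hL : tailLipBound ρ ‖q‖ < 1) (hx : ‖x‖ ≤ ρ) (hy : ‖y‖ ≤ ρ) (hfx : deformedExp x q = 0)
    (hfy : deformedExp y q = 0) : x = y := by
  have h : x - y = -(tail x q - tail y q) := by
    linear_combination (deformedExp_eq_one_add_add_tail x hq).symm.trans hfx
      - (deformedExp_eq_one_add_add_tail y hq).symm.trans hfy
  have hxy := norm_tail_sub_tail_le hx hy hq hρq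
  rw [← norm_neg, ← h] at hxy
  have : ‖x - y‖ = 0 := by nlinarith [norm_nonneg (x - y)]
  rwa [norm_eq_zero, sub_eq_zero] at this

theorem norm_le_of_mem_closedBall_neg_one {r : ℝ} {z : ℂ} (hz : z ∈ Metric.closedBall (-1) r) :
    ‖z‖ ≤ 1 + r := by
  simpa using norm_le_norm_add_const_of_dist_le hz

/-- The zero is the fixed point of the contraction `z ↦ -1 - tail z q`. -/
theorem exists_mem_closedBall_deformedExp_eq_zero_of_tailBound_le {r : ℝ} (hr : 0 ≤ r)
    (hq : ‖q‖ ≤ 1) (hrq : (1 + r) * ‖q‖ ^ 6 ≤ 1) (hT : tailBound (1 + r) ‖q‖ ≤ r)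
    (hL : tailLipBound (1 + r) ‖q‖ < 1) :
    ∃ x ∈ Metric.closedBall (-1) r, deformedExp x q = 0 := by
  set B := Metric.closedBall (-1 : ℂ) r
  set F : ℂ → ℂ := fun z => -1 - tail z q
  have hmaps : MapsTo F B B := fun z hz => by
    rw [Metric.mem_closedBall, dist_eq_norm]
    change ‖-1 - tail z q - -1‖ ≤ r
    rw [sub_sub_cancel_left, norm_neg]
    exact (norm_tail_le (norm_le_of_mem_closedBall_neg_one hz) hq hrq).trans hT
  have hL0 : 0 ≤ tailLipBound (1 + r) ‖q‖ := by unfold tailLipBound; positivity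
  have hlip : LipschitzOnWith (tailLipBound (1 + r) ‖q‖).toNNReal F B :=
    LipschitzOnWith.of_dist_le_mul fun z hz w hw => by
      rw [dist_eq_norm, dist_eq_norm, Real.coe_toNNReal _ hL0, sub_sub_sub_cancel_left,
        norm_sub_rev]
      exact norm_tail_sub_tail_le (norm_le_of_mem_closedBall_neg_one hz)
        (norm_le_of_mem_closedBall_neg_one hw) hq hrq
  have hcontr : ContractingWith (tailLipBound (1 + r) ‖q‖).toNNReal (hmaps.restrict F B B) :=
    ⟨by rwa [← NNReal.coe_lt_coe, Real.coe_toNNReal _ hL0], hlip.mapsToRestrict hmaps⟩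
  obtain ⟨x, hxB, hfix : -1 - tail x q = x, -⟩ := hcontr.exists_fixedPoint'
    Metric.isClosed_closedBall.isComplete hmaps (Metric.mem_closedBall_self hr) (edist_ne_top _ _)
  refine ⟨x, hxB, ?_⟩
  rw [deformedExp_eq_one_add_add_tail x hq]
  linear_combination -hfix

/-- Multiplied by `s`, this is a polynomial inequality in `s` whose left side is increasing. -/
theorem tailBound_lt_sub_one {s : ℝ} (hs : 0 < s) (hs2 : s ^ 2 ≤ 0.44175) :
    tailBound (1.26 / s) (s ^ 2) < 1.26 / s - 1 := by
  have hs1 : s ≤ 0.664643 := by nlinarith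
  have key : s * (1 + 1.26 ^ 2 / 2 + 1.26 ^ 3 * s ^ 3 / 6 + 1.26 ^ 4 * s ^ 8 / 24
      + 1.26 ^ 5 * s ^ 15 / 120 + 1.26 ^ 6 * s ^ 24 / 360) < 1.26 :=
    calc s * (1 + 1.26 ^ 2 / 2 + 1.26 ^ 3 * s ^ 3 / 6 + 1.26 ^ 4 * s ^ 8 / 24
          + 1.26 ^ 5 * s ^ 15 / 120 + 1.26 ^ 6 * s ^ 24 / 360)
        ≤ 0.664643 * (1 + 1.26 ^ 2 / 2 + 1.26 ^ 3 * 0.664643 ^ 3 / 6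
          + 1.26 ^ 4 * 0.664643 ^ 8 / 24 + 1.26 ^ 5 * 0.664643 ^ 15 / 120
          + 1.26 ^ 6 * 0.664643 ^ 24 / 360) := by gcongr
      _ < 1.26 := by norm_num
  have hdiff : 1.26 / s - 1 - tailBound (1.26 / s) (s ^ 2) = (1.26 - s * (1 + 1.26 ^ 2 / 2
      + 1.26 ^ 3 * s ^ 3 / 6 + 1.26 ^ 4 * s ^ 8 / 24 + 1.26 ^ 5 * s ^ 15 / 120
      + 1.26 ^ 6 * s ^ 24 / 360)) / s := by
    unfold tailBound
    field_simp
    ring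
  linarith [div_pos (sub_pos.2 key) hs]

theorem deformedExp_ne_zero (hq : ‖q‖ ≤ 0.44175) (hx : ‖x‖ ≤ 0.831) :
    deformedExp x q ≠ 0 := by
  refine deformedExp_ne_zero_of_add_tailBound_lt (by linarith)
    ((by gcongr : 0.831 * ‖q‖ ^ 6 ≤ 0.831 * 0.44175 ^ 6).trans (by norm_num)) hx ?_
  have hT : tailBound 0.831 ‖q‖ ≤ tailBound 0.831 0.44175 :=
    monotoneOn_tailBound (by norm_num) (norm_nonneg q) (by norm_num) hq
  have : tailBound 0.831 0.44175 < 0.169 := by norm_num [tailBound]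
  linarith

theorem norm_lt_of_deformedExp_eq_zero {s : ℝ} (hs : 0 < s) (hs2 : s ^ 2 = ‖q‖)
    (hq : ‖q‖ ≤ 0.44175) (hx : ‖x‖ < 1.26 / s) (hfx : deformedExp x q = 0) : ‖x‖ < 1.892 := by
  have hs1 : s ≤ 0.664643 := by nlinarith
  have hRq : 1.26 / s * ‖q‖ ^ 6 ≤ 1 := by
    have h11 : 1.26 * s ^ 11 ≤ 1 :=
      (by gcongr : 1.26 * s ^ 11 ≤ 1.26 * 0.664643 ^ 11).trans (by norm_num)
    rw [← hs2, div_mul_eq_mul_div, div_le_one hs]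
    nlinarith
  refine norm_lt_of_deformedExp_eq_zero_of_tailBound_lt (by norm_num) (by linarith) hRq ?_
    (by simpa [hs2] using tailBound_lt_sub_one hs (hs2 ▸ hq)) hx.le hfx
  exact (monotoneOn_tailBound (by norm_num) (norm_nonneg q) (by norm_num) hq).trans_lt
    (by norm_num [tailBound])

theorem exists_mem_closedBall_deformedExp_eq_zero (hq : ‖q‖ ≤ 0.44175) :
    ∃ x ∈ Metric.closedBall (-1) 0.892, deformedExp x q = 0 := by
  refine exists_mem_closedBall_deformedExp_eq_zero_of_tailBound_le (by norm_num) (by linarith)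
    ((by gcongr : (1 + 0.892) * ‖q‖ ^ 6 ≤ (1 + 0.892) * 0.44175 ^ 6).trans (by norm_num)) ?_ ?_
  · exact (monotoneOn_tailBound (by norm_num) (norm_nonneg q) (by norm_num) hq).trans
      (by norm_num [tailBound])
  · exact (monotoneOn_tailLipBound (by norm_num) (norm_nonneg q) (by norm_num) hq).trans_lt
      (by norm_num [tailLipBound])

theorem eq_of_deformedExp_eq_zero (hq : ‖q‖ ≤ 0.44175) (hx : ‖x‖ ≤ 1.892) (hy : ‖y‖ ≤ 1.892)
    (hfx : deformedExp x q = 0) (hfy : deformedExp y q = 0) : x = y :=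
  eq_of_deformedExp_eq_zero_of_tailLipBound_lt (by linarith)
    ((by gcongr : 1.892 * ‖q‖ ^ 6 ≤ 1.892 * 0.44175 ^ 6).trans (by norm_num))
    ((monotoneOn_tailLipBound (by norm_num) (norm_nonneg q) (by norm_num) hq).trans_lt
      (by norm_num [tailLipBound])) hx hy hfx hfy

end DeformedExp

open DeformedExp in
theorem stmt1 (q : ℂ) (hq0 : q ≠ 0) (hq : ‖q‖ < 0.44175) :
    (∀ x : ℂ, ‖x‖ ≤ 1.25 * ‖q‖ ^ ((1 : ℝ) / 2) → deformedExp x q ≠ 0) ∧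
    (∃! x : ℂ, ‖x‖ < 1.26 * ‖q‖ ^ (-(1 : ℝ) / 2) ∧ deformedExp x q = 0) ∧
    (∀ x : ℂ, ‖x‖ < 1.26 * ‖q‖ ^ (-(1 : ℝ) / 2) ∧ deformedExp x q = 0 →
      1.25 * ‖q‖ ^ ((1 : ℝ) / 2) < ‖x‖ ∧
      ‖x‖ < 1.26 * ‖q‖ ^ (-(1 : ℝ) / 2)) := by
  have ht : 0 < ‖q‖ := norm_pos_iff.2 hq0
  set s := ‖q‖ ^ ((1 : ℝ) / 2)
  have hs : 0 < s := by positivity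
  have hs2 : s ^ 2 = ‖q‖ := by
    rw [← Real.rpow_natCast, ← Real.rpow_mul ht.le]; norm_num
  have hs1 : s ≤ 0.664643 := by nlinarith
  rw [neg_div, Real.rpow_neg ht.le, ← div_eq_mul_inv]
  have no_small_zero (x : ℂ) (hx : ‖x‖ ≤ 1.25 * s) : deformedExp x q ≠ 0 :=
    deformedExp_ne_zero hq.le (by linarith)
  obtain ⟨x₀, hx₀, hfx₀⟩ := exists_mem_closedBall_deformedExp_eq_zero hq.le
  have hx₀ : ‖x₀‖ ≤ 1.892 := (norm_le_of_mem_closedBall_neg_one hx₀).trans_eq (by norm_num)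
  have hx₀R : ‖x₀‖ < 1.26 / s := hx₀.trans_lt (by rw [lt_div_iff₀ hs]; linarith)
  refine ⟨no_small_zero, ⟨x₀, ⟨hx₀R, hfx₀⟩, fun y hy => ?_⟩,
    fun x hx => ⟨lt_of_not_ge fun h => no_small_zero x h hx.2, hx.1⟩⟩
  exact eq_of_deformedExp_eq_zero hq.le (norm_lt_of_deformedExp_eq_zero hs hs2 hq.le hy.1 hy.2).le
    hx₀ hy.2 hfx₀
end

section
/- Under these hypotheses, for every k ≥ 1 the family j ↦ 1/(x_k − q·x_j) is summable and its sum equals 0, i.e. Σ_{j≥1} 1/(x_k − q·x_j) = 0. -/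
/-!
Termwise differentiation gives `f'(z) = f(qz)`. The Hadamard product converges locally uniformly
(convergence at `z = 1`, where every factor is `1 + 1/|x_j| ≥ 1`, forces `∑ 1/|x_j| < ∞`), so off
the zeros `f'/f = ∑_j 1/(z - x_j)`. At `w = x_k/q` we have `f'(w) = f(x_k) = 0`, whence
`∑_j 1/(w - x_j) = 0`, which is the claim after multiplying by `q`. This needs `f(w) ≠ 0`, i.e.
`w ≠ x_m` for all `m`: otherwise `f'(x_m) = f(x_k) = 0`, whereas the zeros of a product of
distinct linear factors are simple.
-/

open Filter Set
open scoped Nat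

lemma Finset.one_add_sum_le_prod_one_add {ι R : Type*} [CommSemiring R] [PartialOrder R]
    [IsOrderedRing R] {u : ι → R} (hu : ∀ i, 0 ≤ u i) (s : Finset ι) :
    1 + ∑ i ∈ s, u i ≤ ∏ i ∈ s, (1 + u i) := by
  classical
  induction s using Finset.induction_on with
  | empty => simp
  | insert a s ha ih =>
    rw [Finset.sum_insert ha, Finset.prod_insert ha]
    calc 1 + (u a + ∑ i ∈ s, u i)
        ≤ 1 + (u a + ∑ i ∈ s, u i) + u a * ∑ i ∈ s, u i :=
          le_add_of_nonneg_right (mul_nonneg (hu a) (Finset.sum_nonneg fun i _ => hu i))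
      _ = (1 + u a) * (1 + ∑ i ∈ s, u i) := by ring
      _ ≤ (1 + u a) * ∏ i ∈ s, (1 + u i) :=
          mul_le_mul_of_nonneg_left ih (add_nonneg zero_le_one (hu a))

lemma summable_of_multipliable_one_add {ι : Type*} {u : ι → ℝ} (hu : ∀ i, 0 ≤ u i)
    (h : Multipliable fun i => 1 + u i) : Summable u := by
  refine summable_of_sum_le hu (c := ∏' i, (1 + u i)) fun s => ?_
  have hprod_le : ∏ i ∈ s, (1 + u i) ≤ ∏' i, (1 + u i) :=
    ge_of_tendsto h.hasProd <| (eventually_ge_atTop s).mono fun t hst =>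
      Finset.prod_le_prod_of_subset_of_one_le hst (fun i _ => by linarith [hu i])
        fun i _ _ => by linarith [hu i]
  linarith [Finset.one_add_sum_le_prod_one_add hu s]

lemma summable_of_multipliable_ofReal_one_add {ι : Type*} {u : ι → ℝ} (hu : ∀ i, 0 ≤ u i)
    (h : Multipliable fun i => ((1 + u i : ℝ) : ℂ)) : Summable u := by
  refine summable_of_multipliable_one_add hu ?_
  convert h.map (normHom : ℂ →*₀ ℝ) continuous_norm with i
  rw [Function.comp_apply, normHom_apply, Complex.norm_real,
    Real.norm_of_nonneg (by linarith [hu i])]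

lemma summable_norm_update_zero {ι E : Type*} [NormedAddCommGroup E] [DecidableEq ι]
    {c : ι → E} (hc : Summable (‖c ·‖)) (m : ι) : Summable (‖Function.update c m 0 ·‖) := by
  simpa [Function.apply_update (fun _ => norm)] using hc.update m 0

/-- The genus-zero canonical product with reciprocal zeros `c j`; an index with `c j = 0`
contributes the factor `1`, so `Function.update c m 0` removes the `m`-th factor. -/
noncomputable def canonicalProd (c : ℕ → ℂ) (z : ℂ) : ℂ := ∏' j, (1 - c j * z)

section CanonicalProd

variable {c : ℕ → ℂ}

lemma hasProdLocallyUniformlyOn_canonicalProd (hc : Summable (‖c ·‖)) :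
    HasProdLocallyUniformlyOn (fun j z => 1 - c j * z) (canonicalProd c) univ := by
  simp_rw [sub_eq_add_neg]
  refine hasProdLocallyUniformlyOn_of_forall_compact isOpen_univ fun K _ hK => ?_
  obtain ⟨R, hR⟩ := hK.isBounded.exists_norm_le
  refine (hc.mul_right R).hasProdUniformlyOn_one_add hK (.of_forall fun j z hz => ?_)
    fun j => by fun_prop
  rw [norm_neg, norm_mul]
  exact mul_le_mul_of_nonneg_left (hR z hz) (norm_nonneg _)

lemma hasProd_canonicalProd (hc : Summable (‖c ·‖)) (z : ℂ) :
    HasProd (fun j => 1 - c j * z) (canonicalProd c z) :=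
  (hasProdLocallyUniformlyOn_canonicalProd hc).hasProd (mem_univ z)

lemma differentiable_canonicalProd (hc : Summable (‖c ·‖)) :
    Differentiable ℂ (canonicalProd c) := by
  rw [← differentiableOn_univ]
  exact (hasProdLocallyUniformlyOn_canonicalProd hc).differentiableOn
    (.of_forall fun s => by simpa [Finset.prod_fn] using
      DifferentiableOn.finsetProd fun j _ => by fun_prop) isOpen_univ

lemma canonicalProd_ne_zero (hc : Summable (‖c ·‖)) {z : ℂ} (hz : ∀ j, c j * z ≠ 1) :
    canonicalProd c z ≠ 0 := by
  have hsum : Summable fun j => ‖-(c j * z)‖ := by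
    simpa [norm_mul] using hc.mul_right ‖z‖
  simpa [canonicalProd, sub_eq_add_neg] using tprod_one_add_ne_zero_of_summable
    (fun j => by rw [← sub_eq_add_neg, sub_ne_zero]; exact (hz j).symm) hsum

lemma canonicalProd_eq_mul_update (hc : Summable (‖c ·‖)) (m : ℕ) (z : ℂ) :
    canonicalProd c z = (1 - c m * z) * canonicalProd (Function.update c m 0) z := by
  refine ((hasProd_ite_eq m (1 - c m * z)).mul
    (hasProd_canonicalProd (summable_norm_update_zero hc m) z) |>.congr_fun fun j => ?_).tprod_eq
  rcases eq_or_ne j m with rfl | hj <;> simp [*]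

lemma deriv_canonicalProd_inv_ne_zero (hc : Summable (‖c ·‖)) {m : ℕ} (hm : c m ≠ 0)
    (hinj : ∀ j ≠ m, c j ≠ c m) : deriv (canonicalProd c) (c m)⁻¹ ≠ 0 := by
  have hupd := summable_norm_update_zero hc m
  have hrest : canonicalProd (Function.update c m 0) (c m)⁻¹ ≠ 0 := by
    refine canonicalProd_ne_zero hupd fun j => ?_
    rcases eq_or_ne j m with rfl | hj
    · simp
    · rw [Function.update_of_ne hj, ← div_eq_mul_inv, Ne, div_eq_one_iff_eq hm]
      exact hinj j hj
  have hderiv : HasDerivAt (canonicalProd c)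
      (-c m * canonicalProd (Function.update c m 0) (c m)⁻¹) (c m)⁻¹ := by
    have := (((hasDerivAt_id (c m)⁻¹).const_mul (c m)).const_sub 1).mul
      ((differentiable_canonicalProd hupd (c m)⁻¹).hasDerivAt)
    rw [funext (canonicalProd_eq_mul_update hc m)]
    exact this.congr_deriv (by simp [mul_inv_cancel₀ hm])
  rw [hderiv.deriv]
  exact mul_ne_zero (neg_ne_zero.mpr hm) hrest

lemma summable_div_mul_sub_one (hc : Summable (‖c ·‖)) (z : ℂ) :
    Summable fun j => c j / (c j * z - 1) := by
  refine (hc.mul_left 2).of_norm_bounded_eventually ?_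
  have hsmall : ∀ᶠ j in cofinite, ‖c j * z‖ ≤ 1 / 2 := by
    simpa [norm_mul] using
      (hc.mul_right ‖z‖).tendsto_cofinite_zero.eventually_le_const one_half_pos
  filter_upwards [hsmall] with j hj
  have hden : 1 / 2 ≤ ‖c j * z - 1‖ := by
    have := norm_sub_norm_le 1 (c j * z)
    rw [norm_one, norm_sub_rev] at this
    linarith
  rw [norm_div, div_le_iff₀ (by linarith)]
  nlinarith [norm_nonneg (c j)]

lemma hasSum_logDeriv_canonicalProd (hc : Summable (‖c ·‖)) {z : ℂ} (hz : ∀ j, c j * z ≠ 1) :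
    HasSum (fun j => c j / (c j * z - 1)) (logDeriv (canonicalProd c) z) := by
  have hfactor (j : ℕ) : logDeriv (fun w => 1 - c j * w) z = c j / (c j * z - 1) := by
    have : deriv (fun w => 1 - c j * w) z = -c j := by simp
    rw [logDeriv_apply, this, neg_div, ← div_neg, neg_sub]
  have hsum := summable_div_mul_sub_one hc z
  have : logDeriv (canonicalProd c) z = ∑' j, logDeriv (fun w => 1 - c j * w) z :=
    logDeriv_tprod_eq_tsum isOpen_univ (mem_univ z) (f := fun j w => 1 - c j * w)
      (fun j => sub_ne_zero.mpr (hz j).symm) (fun j => by fun_prop)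
      (by simpa only [hfactor] using hsum)
      (hasProdLocallyUniformlyOn_canonicalProd hc).multipliableLocallyUniformlyOn
      (canonicalProd_ne_zero hc hz)
  rw [this]
  simpa only [hfactor] using hsum.hasSum

end CanonicalProd

lemma summable_mul_pow_sub_one_div_factorial (R : ℝ) :
    Summable fun n : ℕ => n * R ^ (n - 1) / n ! := by
  refine (summable_nat_add_iff 1).mp ((Real.summable_pow_div_factorial R).congr fun n => ?_)
  rw [Nat.add_sub_cancel, Nat.factorial_succ]
  push_cast
  field_simp

lemma hasDerivAt_tsum_pow_mul {b : ℕ → ℂ} (hb : ∀ n, ‖b n‖ ≤ (n ! : ℝ)⁻¹) (z : ℂ) :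
    HasDerivAt (fun w => ∑' n, w ^ n * b n) (∑' n, (n + 1) * z ^ n * b (n + 1)) z := by
  set R := ‖z‖ + 1
  have hbound : ∀ n, ∀ w ∈ Metric.ball (0 : ℂ) R,
      ‖n * w ^ (n - 1) * b n‖ ≤ n * R ^ (n - 1) / n ! := by
    intro n w hw
    rw [mem_ball_zero_iff] at hw
    rw [norm_mul, norm_mul, norm_pow, Complex.norm_natCast, div_eq_mul_inv]
    gcongr
    exact hb n
  have hzR : z ∈ Metric.ball (0 : ℂ) R := by simp [R]
  have hderiv := hasDerivAt_tsum_of_isPreconnected (summable_mul_pow_sub_one_div_factorial R)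
    Metric.isOpen_ball (convex_ball 0 R).isPreconnected
    (fun n w _ => (hasDerivAt_pow n w).mul_const (b n)) hbound
    (Metric.mem_ball_self (by positivity))
    (summable_of_ne_finset_zero (s := {0}) fun n hn => by simp_all) hzR
  rw [(Summable.of_norm_bounded (summable_mul_pow_sub_one_div_factorial R)
    fun n => hbound n z hzR).tsum_eq_zero_add] at hderiv
  simpa using hderiv

lemma succ_mul_div_two (n : ℕ) : (n + 1) * n / 2 = n + n * (n - 1) / 2 := by
  simpa [Nat.choose_two_right] using Nat.choose_succ_succ' n 1

lemma hasDerivAt_deformedExp {q : ℂ} (hq : ‖q‖ ≤ 1) (z : ℂ) :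
    HasDerivAt (deformedExp · q) (deformedExp (q * z) q) z := by
  have hb (n : ℕ) : ‖q ^ (n * (n - 1) / 2) / (n ! : ℂ)‖ ≤ (n ! : ℝ)⁻¹ := by
    rw [norm_div, norm_pow, Complex.norm_natCast, div_eq_mul_inv]
    exact mul_le_of_le_one_left (by positivity) (pow_le_one₀ (norm_nonneg q) hq)
  have hcoeff (n : ℕ) : (n + 1 : ℂ) * z ^ n * (q ^ ((n + 1) * (n + 1 - 1) / 2) / (n + 1)!)
      = (q * z) ^ n * (q ^ (n * (n - 1) / 2) / n !) := by
    rw [Nat.add_sub_cancel, succ_mul_div_two, pow_add, Nat.factorial_succ]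
    push_cast
    field_simp
    ring
  simp_rw [deformedExp, mul_div_assoc, ← hcoeff]
  exact hasDerivAt_tsum_pow_mul hb z

lemma ofReal_inv_div_inv_mul_div_sub_one (a b q : ℝ) (hb : b ≠ 0) (hq : q ≠ 0) :
    (b : ℂ)⁻¹ / ((b : ℂ)⁻¹ * (a / q) - 1) = ((q * (1 / (a - q * b)) : ℝ) : ℂ) := by
  have hb : (b : ℂ) ≠ 0 := Complex.ofReal_ne_zero.mpr hb
  have hq : (q : ℂ) ≠ 0 := Complex.ofReal_ne_zero.mpr hq
  push_cast
  rcases eq_or_ne ((a : ℂ) - q * b) 0 with h | h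
  · rw [h, show (a : ℂ) = q * b by linear_combination h]
    field_simp
    simp
  · field_simp

theorem stmt5 (q : ℝ) (hq : q ∈ Set.Ioo (0 : ℝ) 1) (x : ℕ → ℝ)
    (hanti : StrictAnti x) (hneg : ∀ j, x j < 0)
    (hzero : ∀ j, deformedExp ((x j : ℂ)) ((q : ℂ)) = 0)
    (hprod : ∀ z : ℂ, HasProd (fun j : ℕ => 1 - z / (x j : ℂ)) (deformedExp z (q : ℂ))) :
    ∀ k : ℕ, HasSum (fun j : ℕ => 1 / (x k - q * x j)) 0 := by
  intro k
  obtain ⟨hq0, hq1⟩ := hq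
  set c : ℕ → ℂ := fun j => (x j : ℂ)⁻¹
  have hf : (deformedExp · (q : ℂ)) = canonicalProd c :=
    funext fun z => ((hprod z).congr_fun fun j => by rw [div_eq_inv_mul]).tprod_eq.symm
  have hc : Summable (‖c ·‖) := by
    refine summable_of_multipliable_ofReal_one_add (fun j => norm_nonneg _) ?_
    refine (hprod 1).multipliable.congr fun j => ?_
    simp [c, abs_of_neg (hneg j), sub_eq_add_neg]
  have hderiv (z : ℂ) : deriv (canonicalProd c) z = deformedExp (q * z) q := by
    rw [← hf]
    exact (hasDerivAt_deformedExp (by simpa [abs_of_pos hq0] using hq1.le) z).deriv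
  set w : ℂ := x k / q
  have hqw : (q : ℂ) * w = x k := mul_div_cancel₀ _ (Complex.ofReal_ne_zero.mpr hq0.ne')
  have hw (m : ℕ) : c m * w ≠ 1 := by
    intro hm
    refine deriv_canonicalProd_inv_ne_zero hc (by simpa [c] using (hneg m).ne)
      (fun j hj => by simpa [c] using hanti.injective.ne hj) ?_
    rw [← eq_inv_of_mul_eq_one_right hm, hderiv, hqw, hzero k]
  have hlogDeriv : logDeriv (canonicalProd c) w = 0 := by
    rw [logDeriv_apply, hderiv, hqw, hzero k, zero_div]
  have hsum := hasSum_logDeriv_canonicalProd hc hw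
  simp only [hlogDeriv, c, w, ofReal_inv_div_inv_mul_div_sub_one _ _ _ (hneg _).ne hq0.ne']
    at hsum
  have hreal : HasSum (fun j => q * (1 / (x k - q * x j))) 0 :=
    Complex.hasSum_ofReal.mp (by rwa [Complex.ofReal_zero])
  exact (hasSum_mul_left_iff hq0.ne').mp (by rwa [mul_zero])
end

section
/- Let q ∈ (0,1), let k ≥ 1 be an integer and let w ∈ ℂ with w ≠ 0. Then the series Σ_{i≥1} (−1)^i·(k!·k^i/(k+i)!)·w^{i+1}·q^{i(i+1)/2} converges absolutely, and f(−k·q^{1−k}·w; q) = 0 if and only if w = 1 + k!·Σ_{i=1}^{k−1} (−1)^i·(k^{−i−1}/(k−i−1)!)·w^{−i}·q^{i(i+1)/2} − k!·Σ_{i=1}^{∞} (−1)^i·(k^i/(k+i)!)·w^{i+1}·q^{i(i+1)/2}. -/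
open scoped Nat

lemma Nat.choose_two_add (m j : ℕ) : (m + j).choose 2 = m.choose 2 + j.choose 2 + m * j := by
  qify
  simp only [Nat.cast_choose_two]
  push_cast
  ring

lemma Nat.choose_two_add_choose_two_succ (i : ℕ) : i.choose 2 + (i + 1).choose 2 = i * i := by
  qify
  simp only [Nat.cast_choose_two]
  push_cast
  ring

noncomputable def deformedExpTerm (x q : ℂ) (n : ℕ) : ℂ :=
  x ^ n * q ^ (n * (n - 1) / 2) / (n ! : ℂ)

lemma deformedExp_eq_tsum (x q : ℂ) : deformedExp x q = ∑' n, deformedExpTerm x q n := rfl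

lemma deformedExpTerm_mul_factorial (x q : ℂ) (n : ℕ) :
    deformedExpTerm x q n * n ! = x ^ n * q ^ n.choose 2 := by
  rw [deformedExpTerm, Nat.choose_two_right,
    div_mul_cancel₀ _ (by exact_mod_cast n.factorial_ne_zero)]

lemma deformedExpTerm_ne_zero {x q : ℂ} (hx : x ≠ 0) (hq : q ≠ 0) (n : ℕ) :
    deformedExpTerm x q n ≠ 0 := by
  unfold deformedExpTerm
  have : (n ! : ℂ) ≠ 0 := by exact_mod_cast n.factorial_ne_zero
  positivity

lemma norm_deformedExpTerm_le {q : ℂ} (hq : ‖q‖ ≤ 1) (x : ℂ) (n : ℕ) :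
    ‖deformedExpTerm x q n‖ ≤ ‖x‖ ^ n / n ! := by
  rw [deformedExpTerm, norm_div, norm_mul, norm_pow, norm_pow, Complex.norm_natCast]
  gcongr
  exact mul_le_of_le_one_right (by positivity) (pow_le_one₀ (norm_nonneg q) hq)

lemma summable_norm_deformedExpTerm {q : ℂ} (hq : ‖q‖ ≤ 1) (x : ℂ) :
    Summable fun n => ‖deformedExpTerm x q n‖ :=
  .of_nonneg_of_le (fun _ => norm_nonneg _) (norm_deformedExpTerm_le hq x)
    (Real.summable_pow_div_factorial ‖x‖)

lemma deformedExpTerm_add_mul_factorial (x q : ℂ) (m j : ℕ) :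
    deformedExpTerm x q (m + j) * (m + j)! =
      deformedExpTerm x q m * m ! * (x ^ j * q ^ (j.choose 2 + m * j)) := by
  rw [deformedExpTerm_mul_factorial, deformedExpTerm_mul_factorial, Nat.choose_two_add]
  ring

lemma deformedExpTerm_sub_mul_factorial (x q : ℂ) {m i : ℕ} (hi : i ≤ m) :
    deformedExpTerm x q (m - i) * (m - i)! * (x * q ^ m) ^ i =
      deformedExpTerm x q m * m ! * q ^ (i + 1).choose 2 := by
  obtain ⟨l, rfl⟩ := Nat.exists_eq_add_of_le' hi
  have hexp : (l + i) * i = i.choose 2 + l * i + (i + 1).choose 2 := by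
    rw [add_mul, ← Nat.choose_two_add_choose_two_succ]
    ring
  rw [Nat.add_sub_cancel, deformedExpTerm_add_mul_factorial, mul_pow, ← pow_mul, hexp, pow_add]
  ring

namespace DeformedExp

noncomputable def headTerm (k : ℕ) (w q : ℂ) (i : ℕ) : ℂ :=
  (-1 : ℂ) ^ i * ((k : ℂ) ^ (-(i : ℤ) - 1) / ((k - i - 1).factorial : ℂ)) *
    w ^ (-(i : ℤ)) * q ^ (i * (i + 1) / 2)

noncomputable def tailTerm (k : ℕ) (w q : ℂ) (i : ℕ) : ℂ :=
  (-1 : ℂ) ^ (i + 1) * ((k : ℂ) ^ (i + 1) / ((k + (i + 1)).factorial : ℂ)) *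
    w ^ (i + 2) * q ^ ((i + 1) * (i + 2) / 2)

section

variable {k : ℕ} {w q : ℂ}

lemma factorial_mul_headTerm_zero (hk : 1 ≤ k) : (k ! : ℂ) * headTerm k w q 0 = 1 := by
  obtain ⟨n, rfl⟩ := Nat.exists_eq_add_of_le' hk
  have hf : (n ! : ℂ) ≠ 0 := by exact_mod_cast n.factorial_ne_zero
  have hk0 : (n : ℂ) + 1 ≠ 0 := by exact_mod_cast n.succ_ne_zero
  simp only [headTerm, Nat.cast_zero, neg_zero, zero_sub, zpow_neg_one, zpow_zero, Nat.sub_zero,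
    Nat.add_sub_cancel, pow_zero, one_mul, mul_one, Nat.factorial_succ]
  push_cast
  field_simp

variable {x : ℂ} (hx : x * q ^ (k - 1) = -k * w)
include hx

lemma deformedExpTerm_pred_add_mul_factorial (j : ℕ) :
    deformedExpTerm x q (k - 1 + j) * (k - 1 + j)! =
      deformedExpTerm x q (k - 1) * (k - 1)! * ((-k * w) ^ j * q ^ j.choose 2) := by
  rw [deformedExpTerm_add_mul_factorial, ← hx]
  ring

lemma deformedExpTerm_self (hk : 1 ≤ k) :
    deformedExpTerm x q k = -deformedExpTerm x q (k - 1) * w := by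
  have h := deformedExpTerm_pred_add_mul_factorial hx 1
  rw [Nat.sub_add_cancel hk, ← Nat.mul_factorial_pred (by omega : k ≠ 0)] at h
  have hk0 : (k : ℂ) ≠ 0 := by exact_mod_cast (by omega : k ≠ 0)
  have hf : ((k - 1)! : ℂ) ≠ 0 := by exact_mod_cast (k - 1).factorial_ne_zero
  apply mul_right_cancel₀ (mul_ne_zero hk0 hf)
  simp only [pow_one, show Nat.choose 1 2 = 0 from rfl, pow_zero, mul_one] at h
  push_cast at h
  linear_combination h

lemma deformedExpTerm_add_succ (hk : 1 ≤ k) (i : ℕ) :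
    deformedExpTerm x q (i + (k + 1)) =
      -deformedExpTerm x q (k - 1) * k ! * tailTerm k w q i := by
  have h := deformedExpTerm_pred_add_mul_factorial hx (i + 2)
  obtain ⟨n, rfl⟩ := Nat.exists_eq_add_of_le' hk
  have hf : ((i + (n + 1 + 1))! : ℂ) ≠ 0 := by
    exact_mod_cast (i + (n + 1 + 1)).factorial_ne_zero
  rw [show n + 1 - 1 + (i + 2) = i + (n + 1 + 1) by omega] at h
  apply mul_right_cancel₀ hf
  rw [tailTerm, show n + 1 + (i + 1) = i + (n + 1 + 1) by omega,
    show (i + 1) * (i + 2) / 2 = (i + 2).choose 2 by rw [Nat.choose_two_right, mul_comm]; rfl]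
  rw [mul_pow, neg_pow] at h
  simp only [Nat.add_sub_cancel, Nat.factorial_succ] at h ⊢
  field_simp
  push_cast at h ⊢
  linear_combination h

lemma deformedExpTerm_pred_sub (hk : 1 ≤ k) (hw : w ≠ 0) {i : ℕ} (hi : i < k) :
    deformedExpTerm x q (k - 1 - i) =
      deformedExpTerm x q (k - 1) * k ! * headTerm k w q i := by
  have h := deformedExpTerm_sub_mul_factorial x q (by omega : i ≤ k - 1)
  rw [hx] at h
  obtain ⟨n, rfl⟩ := Nat.exists_eq_add_of_le' hk
  have hn : ((n - i)! : ℂ) ≠ 0 := by exact_mod_cast (n - i).factorial_ne_zero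
  have hk0 : (n : ℂ) + 1 ≠ 0 := by exact_mod_cast n.succ_ne_zero
  rw [headTerm, show n + 1 - i - 1 = n - i by omega,
    show -(i : ℤ) - 1 = -((i + 1 : ℕ) : ℤ) by push_cast; ring, zpow_neg, zpow_neg,
    zpow_natCast, zpow_natCast,
    show i * (i + 1) / 2 = (i + 1).choose 2 by rw [Nat.choose_two_right, mul_comm]; rfl]
  rw [mul_pow, neg_pow] at h
  simp only [Nat.add_sub_cancel, Nat.factorial_succ] at h ⊢
  have hs : ((-1 : ℂ) ^ i)⁻¹ = (-1) ^ i := by rw [← inv_pow, inv_neg, inv_one]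
  push_cast at h ⊢
  rw [mul_assoc] at h
  rw [eq_div_of_mul_eq (by simp [hn, hw, hk0]) h, div_eq_mul_inv, mul_inv, mul_inv, mul_inv, hs]
  field_simp
  ring

lemma deformedExpTerm_pred_ne_zero (hk : 1 ≤ k) (hw : w ≠ 0) (hq : q ≠ 0) :
    deformedExpTerm x q (k - 1) ≠ 0 := by
  refine deformedExpTerm_ne_zero (fun hx0 => ?_) hq _
  have hk0 : (k : ℂ) ≠ 0 := by exact_mod_cast (by omega : k ≠ 0)
  simp [hx0, hk0, hw] at hx

lemma sum_range_deformedExpTerm (hk : 1 ≤ k) (hw : w ≠ 0) :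
    ∑ n ∈ Finset.range k, deformedExpTerm x q n =
      deformedExpTerm x q (k - 1) *
        (1 + k ! * ∑ i ∈ Finset.Icc 1 (k - 1), headTerm k w q i) := by
  have hrange : Finset.range k = insert 0 (Finset.Icc 1 (k - 1)) := by
    ext n
    simp only [Finset.mem_range, Finset.mem_insert, Finset.mem_Icc]
    omega
  rw [← Finset.sum_range_reflect, Finset.sum_congr rfl fun i hi =>
      deformedExpTerm_pred_sub hx hk hw (Finset.mem_range.1 hi), ← Finset.mul_sum, hrange,
    Finset.sum_insert (by simp), mul_assoc, mul_add, factorial_mul_headTerm_zero hk]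

lemma deformedExp_eq_mul (hk : 1 ≤ k) (hw : w ≠ 0) (hq : ‖q‖ ≤ 1) :
    deformedExp x q = deformedExpTerm x q (k - 1) * (1 + k ! * ∑ i ∈ Finset.Icc 1 (k - 1),
      headTerm k w q i - k ! * ∑' i, tailTerm k w q i - w) := by
  have hsum := (summable_norm_deformedExpTerm hq x).of_norm
  rw [deformedExp_eq_tsum, ← hsum.sum_add_tsum_nat_add (k + 1), Finset.sum_range_succ,
    sum_range_deformedExpTerm hx hk hw, deformedExpTerm_self hx hk,
    tsum_congr (deformedExpTerm_add_succ hx hk), tsum_mul_left]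
  ring

lemma summable_norm_tailTerm (hk : 1 ≤ k) (hw : w ≠ 0) (hq0 : q ≠ 0) (hq : ‖q‖ ≤ 1) :
    Summable fun i => ‖tailTerm k w q i‖ := by
  have hC := deformedExpTerm_pred_ne_zero hx hk hw hq0
  refine (((summable_nat_add_iff (k + 1)).2 (summable_norm_deformedExpTerm hq x)).div_const
    ‖deformedExpTerm x q (k - 1) * (k ! : ℂ)‖).congr fun i => ?_
  rw [deformedExpTerm_add_succ hx hk, norm_mul, neg_mul, norm_neg,
    mul_div_cancel_left₀ _ (by simpa using ⟨hC, k.factorial_ne_zero⟩)]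

end

end DeformedExp

theorem stmt9 (q : ℝ) (hq : q ∈ Set.Ioo (0 : ℝ) 1) (k : ℕ) (hk : 1 ≤ k)
    (w : ℂ) (hw : w ≠ 0) :
    Summable (fun i : ℕ => ‖(-1 : ℂ) ^ (i + 1) *
      ((k.factorial : ℂ) * (k : ℂ) ^ (i + 1) / ((k + (i + 1)).factorial : ℂ)) *
      w ^ (i + 2) * (q : ℂ) ^ ((i + 1) * (i + 2) / 2)‖) ∧
    (deformedExp (-(k : ℂ) * (q : ℂ) ^ ((1 : ℤ) - (k : ℤ)) * w) (q : ℂ) = 0 ↔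
      w = 1 + (k.factorial : ℂ) * (∑ i ∈ Finset.Icc 1 (k - 1), (-1 : ℂ) ^ i *
            ((k : ℂ) ^ (-(i : ℤ) - 1) / ((k - i - 1).factorial : ℂ)) *
            w ^ (-(i : ℤ)) * (q : ℂ) ^ (i * (i + 1) / 2))
          - (k.factorial : ℂ) * ∑' i : ℕ, (-1 : ℂ) ^ (i + 1) *
            ((k : ℂ) ^ (i + 1) / ((k + (i + 1)).factorial : ℂ)) *
            w ^ (i + 2) * (q : ℂ) ^ ((i + 1) * (i + 2) / 2)) := by
  obtain ⟨hq0, hq1⟩ := hq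
  have hQ0 : (q : ℂ) ≠ 0 := by exact_mod_cast hq0.ne'
  have hQ1 : ‖(q : ℂ)‖ ≤ 1 := by rw [Complex.norm_real, Real.norm_of_nonneg hq0.le]; exact hq1.le
  have hx : -(k : ℂ) * (q : ℂ) ^ ((1 : ℤ) - k) * w * (q : ℂ) ^ (k - 1) = -k * w := by
    rw [mul_right_comm, mul_assoc (-(k : ℂ)), ← zpow_natCast, ← zpow_add₀ hQ0, Nat.cast_sub hk]
    simp
  refine ⟨((DeformedExp.summable_norm_tailTerm hx hk hw hQ0 hQ1).mul_left (k ! : ℝ)).congr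
    fun i => ?_, ?_⟩
  · rw [← Complex.norm_natCast, ← norm_mul, DeformedExp.tailTerm]
    congr 1
    ring
  · rw [DeformedExp.deformedExp_eq_mul hx hk hw hQ1, mul_eq_zero,
      or_iff_right (DeformedExp.deformedExpTerm_pred_ne_zero hx hk hw hQ0), sub_eq_zero, eq_comm]
    exact Iff.rfl
end

section
/- For every integer k ≥ 1, every q ∈ ℂ with |q| ≤ 1/20 and every w ∈ ℂ with |w − 1| ≤ 1/2, the series defining F_k(w;q) converges absolutely and |F_k(w;q)| ≤ 5. -/
/-!
Both coefficients have absolute value at most `1`: the product `α_i(k)` has a zero factor once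
`i ≥ k` and all factors in `[0, 1]` before (for `k = 0` every factor is `1`, as `l / 0 = 0`), and
`k^i k! ≤ (k + i)!`. Since the exponent of `q` in the `(n+1)`-st term is at least `n`, the terms are
dominated by `2 (1/10)^n + (9/4) (3/40)^n` when `1/2 ≤ |w| ≤ 3/2` and `|q| ≤ 1/20`, and this
majorant sums to `20/9 + 90/37 < 5`.
-/

/-- `α_i(k) = ∏_{l=1}^{i} (1 - l/k)`. -/
noncomputable def alphaCoef (i k : ℕ) : ℝ :=
  ∏ l ∈ Finset.Icc 1 i, (1 - (l : ℝ) / (k : ℝ))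

/-- `α_i(-k)⁻¹ = k^i · k! / (k+i)!`. -/
noncomputable def alphaNegInv (i k : ℕ) : ℝ :=
  (k : ℝ) ^ i * (k.factorial : ℝ) / ((k + i).factorial : ℝ)

/-- The `i`-th term of the series defining `F_k(w;q)`. -/
noncomputable def Fterm (k : ℕ) (w q : ℂ) (i : ℕ) : ℂ :=
  (-1 : ℂ) ^ i * ((alphaCoef i k : ℂ) * w ^ (-(i : ℤ)) - (alphaNegInv i k : ℂ) * w ^ (i + 1)) *
    q ^ (i * (i + 1) / 2 - 1)

/-- `F_k(w;q) = ∑_{i≥1} (-1)^i [α_i(k) w^{-i} - α_i(-k)⁻¹ w^{i+1}] q^{i(i+1)/2 - 1}`. -/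
noncomputable def FK (k : ℕ) (w q : ℂ) : ℂ :=
  ∑' i : ℕ, Fterm k w q (i + 1)

lemma abs_alphaCoef_le_one (i k : ℕ) : |alphaCoef i k| ≤ 1 := by
  rcases Nat.eq_zero_or_pos k with rfl | hk
  · simp [alphaCoef]
  have hk' : (0 : ℝ) < k := by exact_mod_cast hk
  unfold alphaCoef
  by_cases hki : k ≤ i
  · rw [Finset.prod_eq_zero (Finset.mem_Icc.mpr ⟨hk, hki⟩) (by rw [div_self hk'.ne', sub_self])]
    simp
  have hfactor : ∀ l ∈ Finset.Icc 1 i, 0 ≤ 1 - (l : ℝ) / k := fun l hl => by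
    have hlk : (l : ℝ) ≤ k := by exact_mod_cast (Finset.mem_Icc.mp hl).2.trans (by omega)
    rw [sub_nonneg]
    exact div_le_one_of_le₀ hlk hk'.le
  rw [abs_of_nonneg (Finset.prod_nonneg hfactor)]
  exact Finset.prod_le_one hfactor fun l _ => sub_le_self _ (by positivity)

lemma abs_alphaNegInv_le_one (i k : ℕ) : |alphaNegInv i k| ≤ 1 := by
  unfold alphaNegInv
  rw [abs_of_nonneg (by positivity), div_le_one (by positivity)]
  have h : k ^ i * k.factorial ≤ (k + i).factorial :=
    calc k ^ i * k.factorial ≤ k.factorial * (k + 1) ^ i := by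
          rw [mul_comm]; gcongr; omega
      _ ≤ (k + i).factorial := Nat.factorial_mul_pow_le_factorial
  exact_mod_cast h

lemma norm_Fterm_succ_le (k : ℕ) {q : ℂ} (hq : ‖q‖ ≤ 1) (w : ℂ) (n : ℕ) :
    ‖Fterm k w q (n + 1)‖ ≤ (‖w‖⁻¹ ^ (n + 1) + ‖w‖ ^ (n + 2)) * ‖q‖ ^ n := by
  have hexp : n ≤ (n + 1) * (n + 1 + 1) / 2 - 1 :=
    Nat.le_sub_one_of_lt <| Nat.lt_of_succ_le <| (Nat.le_div_iff_mul_le two_pos).2 (by nlinarith)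
  have hα : ‖(alphaCoef (n + 1) k : ℂ)‖ ≤ 1 := by
    rw [Complex.norm_real, Real.norm_eq_abs]; exact abs_alphaCoef_le_one _ _
  have hβ : ‖(alphaNegInv (n + 1) k : ℂ)‖ ≤ 1 := by
    rw [Complex.norm_real, Real.norm_eq_abs]; exact abs_alphaNegInv_le_one _ _
  unfold Fterm
  rw [norm_mul, norm_mul, norm_pow, norm_neg, norm_one, one_pow, one_mul, norm_pow]
  calc _ ≤ (‖(alphaCoef (n + 1) k : ℂ)‖ * ‖w ^ (-((n + 1 : ℕ) : ℤ))‖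
          + ‖(alphaNegInv (n + 1) k : ℂ)‖ * ‖w ^ (n + 1 + 1)‖) * ‖q‖ ^ n := by
        gcongr ?_ * ?_
        · exact (norm_sub_le _ _).trans_eq (by rw [norm_mul, norm_mul])
        · exact pow_le_pow_of_le_one (norm_nonneg q) hq hexp
    _ ≤ (1 * ‖w‖⁻¹ ^ (n + 1) + 1 * ‖w‖ ^ (n + 2)) * ‖q‖ ^ n := by
        rw [norm_zpow, zpow_neg, zpow_natCast, inv_pow, norm_pow]
        gcongr
    _ = _ := by ring

theorem stmt10_general (k : ℕ) (q : ℂ) (hq : ‖q‖ ≤ 1 / 20)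
    (w : ℂ) (hw : ‖w - 1‖ ≤ 1 / 2) :
    Summable (fun i : ℕ => ‖Fterm k w q (i + 1)‖) ∧
    ‖FK k w q‖ ≤ 5 := by
  have hw_near_one := abs_le.1 ((abs_norm_sub_norm_le w 1).trans hw)
  rw [norm_one] at hw_near_one
  have hw_inv : ‖w‖⁻¹ ≤ 2 := by
    rw [inv_le_comm₀ (by linarith) two_pos]; linarith
  have hbound : ∀ n, ‖Fterm k w q (n + 1)‖ ≤ 2 * (1 / 10) ^ n + 9 / 4 * (3 / 40) ^ n := by
    intro n
    calc _ ≤ (‖w‖⁻¹ ^ (n + 1) + ‖w‖ ^ (n + 2)) * ‖q‖ ^ n :=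
          norm_Fterm_succ_le k (hq.trans (by norm_num)) w n
      _ ≤ (2 ^ (n + 1) + (3 / 2) ^ (n + 2)) * (1 / 20) ^ n := by
          gcongr; linarith
      _ = 2 * (2 * (1 / 20)) ^ n + 9 / 4 * (3 / 2 * (1 / 20)) ^ n := by
          rw [mul_pow, mul_pow]; ring
      _ = _ := by norm_num
  have hmajorant : HasSum (fun n : ℕ => 2 * (1 / 10 : ℝ) ^ n + 9 / 4 * (3 / 40) ^ n)
      (2 * (1 - 1 / 10)⁻¹ + 9 / 4 * (1 - 3 / 40)⁻¹) :=
    ((hasSum_geometric_of_lt_one (by norm_num) (by norm_num)).mul_left 2).add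
      ((hasSum_geometric_of_lt_one (by norm_num) (by norm_num)).mul_left (9 / 4))
  refine ⟨.of_nonneg_of_le (fun _ => norm_nonneg _) hbound hmajorant.summable, ?_⟩
  calc ‖FK k w q‖ ≤ _ := tsum_of_norm_bounded hmajorant hbound
    _ ≤ 5 := by norm_num

theorem stmt10 (k : ℕ) (hk : 1 ≤ k) (q : ℂ) (hq : ‖q‖ ≤ 1 / 20)
    (w : ℂ) (hw : ‖w - 1‖ ≤ 1 / 2) :
    Summable (fun i : ℕ => ‖Fterm k w q (i + 1)‖) ∧
    ‖FK k w q‖ ≤ 5 :=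
  stmt10_general k q hq w hw
end

section
/- For all integers i ≥ 1 and k ≥ 1, one has |∏_{l=1}^{i} (1 − l/k) − (1 − i(i+1)/(2k) + (i−1)·i·(i+1)·(3i+2)/(24k²))| ≤ (i+1)!/k³. -/
/-!
Write `P i x = ∏_{l=1}^{i} (1 - l x)` and let `T i x` be its expansion up to order two in `x`.
Since `P (i+1) x = P i x * (1 - (i+1) x)`, the error `E i = P i - T i` satisfies
`E (i+1) = E i * (1 - (i+1) x) - (i+1) e₂(i) x³`, where `e₂(i)` is the `x²`-coefficient of `T i`.
For `0 ≤ x ≤ 1` the factor `1 - (i+1) x` has absolute value at most `i`, and `e₂(i) ≤ 2 i!`,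
so `|E i| ≤ (i+1)! x³` propagates by induction; the theorem is the case `x = 1/k`.
-/

open Finset Nat

/-- `e₂(i) = ∑_{1 ≤ l < m ≤ i} l m`, the second elementary symmetric polynomial of `1, …, i`. -/
noncomputable def esymm2 (i : ℕ) : ℝ := ((i : ℝ) - 1) * i * (i + 1) * (3 * i + 2) / 24

/-- The second-order expansion `1 - e₁(i) x + e₂(i) x²` of `∏_{l=1}^{i} (1 - l x)`. -/
noncomputable def quadApprox (i : ℕ) (x : ℝ) : ℝ := 1 - i * (i + 1) / 2 * x + esymm2 i * x ^ 2

lemma quadApprox_succ (i : ℕ) (x : ℝ) :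
    quadApprox (i + 1) x = quadApprox i x * (1 - (i + 1) * x) + (i + 1) * esymm2 i * x ^ 3 := by
  simp only [quadApprox, esymm2]
  push_cast
  ring

lemma esymm2_nonneg {i : ℕ} (hi : 1 ≤ i) : 0 ≤ esymm2 i := by
  have : (1 : ℝ) ≤ i := by exact_mod_cast hi
  unfold esymm2
  have : (0 : ℝ) ≤ i - 1 := by linarith
  positivity

lemma mul_succ_mul_succ_mul_le_factorial (j : ℕ) :
    j * (j + 1) * (j + 2) * (3 * j + 5) ≤ 48 * (j + 1)! := by
  rcases lt_or_ge j 2 with hj | hj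
  · interval_cases j <;> decide
  induction j, hj using Nat.le_induction with
  | base => decide
  | succ n hn ih =>
    have step : (n + 3) * (3 * n + 8) ≤ n * (n + 2) * (3 * n + 5) := by
      obtain ⟨m, rfl⟩ := exists_add_of_le hn
      ring_nf
      nlinarith [Nat.zero_le m]
    calc (n + 1) * (n + 1 + 1) * (n + 1 + 2) * (3 * (n + 1) + 5)
        = (n + 1) * (n + 2) * ((n + 3) * (3 * n + 8)) := by ring
      _ ≤ (n + 1) * (n + 2) * (n * (n + 2) * (3 * n + 5)) := by gcongr
      _ = (n + 2) * (n * (n + 1) * (n + 2) * (3 * n + 5)) := by ring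
      _ ≤ (n + 2) * (48 * (n + 1)!) := by gcongr
      _ = 48 * (n + 1 + 1)! := by rw [factorial_succ (n + 1)]; ring

lemma esymm2_le_two_mul_factorial {i : ℕ} (hi : 1 ≤ i) : esymm2 i ≤ 2 * i ! := by
  obtain ⟨j, rfl⟩ := exists_add_of_le hi
  have h : ((j * (j + 1) * (j + 2) * (3 * j + 5) : ℕ) : ℝ) ≤ ((48 * (j + 1)! : ℕ) : ℝ) := by
    exact_mod_cast mul_succ_mul_succ_mul_le_factorial j
  rw [add_comm 1 j, esymm2]
  push_cast at h ⊢
  linarith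

lemma abs_one_sub_succ_mul_le {x : ℝ} (hx0 : 0 ≤ x) (hx1 : x ≤ 1) {n : ℕ} (hn : 1 ≤ n) :
    |1 - (n + 1) * x| ≤ n := by
  have : (1 : ℝ) ≤ n := by exact_mod_cast hn
  rw [abs_le]
  constructor <;> nlinarith

theorem abs_prod_one_sub_mul_sub_quadApprox_le {x : ℝ} (hx0 : 0 ≤ x) (hx1 : x ≤ 1) {i : ℕ}
    (hi : 1 ≤ i) : |∏ l ∈ Icc 1 i, (1 - l * x) - quadApprox i x| ≤ (i + 1)! * x ^ 3 := by
  induction i, hi using Nat.le_induction with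
  | base => simp [quadApprox, esymm2, hx0]
  | succ n hn ih =>
    rw [prod_Icc_succ_top (by omega), quadApprox_succ]
    set E := ∏ l ∈ Icc 1 n, (1 - l * x) - quadApprox n x
    have hc := esymm2_nonneg hn
    calc |(∏ l ∈ Icc 1 n, (1 - l * x)) * (1 - ((n + 1 : ℕ) : ℝ) * x) -
          (quadApprox n x * (1 - (n + 1) * x) + (n + 1) * esymm2 n * x ^ 3)|
        = |E * (1 - (n + 1) * x) - (n + 1) * esymm2 n * x ^ 3| := by
          congr 1; simp only [E]; push_cast; ring
      _ ≤ |E| * |1 - (n + 1) * x| + (n + 1) * esymm2 n * x ^ 3 := by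
        refine (abs_sub _ _).trans ?_
        rw [abs_mul, abs_of_nonneg (by positivity : 0 ≤ (n + 1) * esymm2 n * x ^ 3)]
      _ ≤ (n + 1)! * x ^ 3 * n + (n + 1) * (2 * n !) * x ^ 3 := by
        gcongr
        · exact abs_one_sub_succ_mul_le hx0 hx1 hn
        · exact esymm2_le_two_mul_factorial hn
      _ = (n + 1 + 1)! * x ^ 3 := by push_cast [factorial_succ]; ring

theorem stmt14 (i k : ℕ) (hi : 1 ≤ i) (hk : 1 ≤ k) :
    |(∏ l ∈ Finset.Icc 1 i, (1 - (l : ℝ) / (k : ℝ))) -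
        (1 - (i : ℝ) * ((i : ℝ) + 1) / (2 * (k : ℝ)) +
          ((i : ℝ) - 1) * (i : ℝ) * ((i : ℝ) + 1) * (3 * (i : ℝ) + 2) / (24 * (k : ℝ) ^ 2))| ≤
      ((i + 1).factorial : ℝ) / (k : ℝ) ^ 3 := by
  have hk' : (1 : ℝ) ≤ k := by exact_mod_cast hk
  have h := abs_prod_one_sub_mul_sub_quadApprox_le (x := 1 / k) (by positivity)
    (div_le_one_of_le₀ hk' (by positivity)) hi
  simp only [quadApprox, esymm2, ← div_eq_mul_one_div] at h
  convert h using 3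
  · ring
  · ring
end

section
/- Define μ₁(n) := Σ_{l≥1} l·⌊2n/(l(l+1))⌋ (a finite sum). Then μ₁(2) = 2, and μ₁(n) > n for every integer n ≥ 3. -/
/-- `μ₁(n) = ∑_{l≥1} l · ⌊2n/(l(l+1))⌋` (the summand vanishes for `l(l+1) > 2n`,
so the range `1 ≤ l ≤ 2n` captures all nonzero terms). -/
def mu1 (n : ℕ) : ℕ := ∑ l ∈ Finset.Icc 1 (2 * n), l * (2 * n / (l * (l + 1)))

/-! The terms `l = 1` and `l = 2` of `μ₁(n)` already contribute `n + 2⌊n/3⌋`, which exceeds `n`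
as soon as `n ≥ 3`. -/

theorem add_two_mul_div_three_le_mu1 {n : ℕ} (hn : 1 ≤ n) : n + 2 * (n / 3) ≤ mu1 n := by
  have hpair : ({1, 2} : Finset ℕ) ⊆ Finset.Icc 1 (2 * n) := by
    intro l hl
    simp only [Finset.mem_insert, Finset.mem_singleton] at hl
    simp only [Finset.mem_Icc]
    omega
  have hterms : ∑ l ∈ ({1, 2} : Finset ℕ), l * (2 * n / (l * (l + 1))) = n + 2 * (n / 3) := by
    rw [Finset.sum_pair (by norm_num), show 2 * (2 + 1) = 2 * 3 by rfl,
      Nat.mul_div_mul_left n 3 two_pos]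
    omega
  exact hterms ▸ Finset.sum_le_sum_of_subset hpair

theorem lt_mu1 {n : ℕ} (hn : 3 ≤ n) : n < mu1 n := by
  have hdiv : 0 < n / 3 := Nat.div_pos hn (by norm_num)
  have := add_two_mul_div_three_le_mu1 (n := n) (by omega)
  omega

theorem stmt17 : mu1 2 = 2 ∧ ∀ n : ℕ, 3 ≤ n → (n : ℕ) < mu1 n :=
  ⟨by decide, fun _ => lt_mu1⟩
end

section
/- Let P(x) = Σ_{j=0}^{n} a_j x^j be a real polynomial with a_n > 0, let 1 ≤ m ≤ n, and assume a_j ≥ 0 for all j with m ≤ j ≤ n. Fix r > 0 and set b(r) := Σ_{j=m}^{n} a_j r^{j−m}, c(r) := max_{1≤i≤m} (|a_{m−i}|/b(r))^{1/i}, and ν_r(P) := max{r, 2·c(r)}. Then P(x) > 0 for every real x > ν_r(P). -/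
/-!
Split `P(x)` at degree `m`. Since `x ≥ r` and the top coefficients are nonnegative, the top part
is at least `b x^m`. Each low coefficient satisfies `|a_j| ≤ b c^(m-j) ≤ b (x/2)^(m-j)`, so the low
part is bounded in absolute value by `b (x/2)^m (1 + 2 + ⋯ + 2^(m-1)) < b x^m`.
-/

open Finset

lemma le_mul_pow_of_div_rpow_one_div_le {y b c : ℝ} {i : ℕ} (hy : 0 ≤ y) (hb : 0 < b)
    (hi : i ≠ 0) (h : (y / b) ^ ((1 : ℝ) / i) ≤ c) : y ≤ b * c ^ i := by
  have hyb : 0 ≤ y / b := div_nonneg hy hb.le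
  have hroot : ((y / b) ^ ((1 : ℝ) / i)) ^ i = y / b := by
    rw [one_div, Real.rpow_inv_natCast_pow hyb hi]
  have : y / b ≤ c ^ i := hroot ▸ pow_le_pow_left₀ (Real.rpow_nonneg hyb _) h i
  rwa [div_le_iff₀' hb] at this

lemma sum_range_succ_eq_sum_range_add_sum_Icc {M : Type*} [AddCommMonoid M] (f : ℕ → M) {m n : ℕ} (hmn : m ≤ n) :
    ∑ j ∈ range (n + 1), f j = ∑ j ∈ range m, f j + ∑ j ∈ Icc m n, f j := by
  rw [← Ico_add_one_right_eq_Icc, sum_range_add_sum_Ico f (by omega)]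

lemma mul_pow_le_sum_Icc_mul_pow {a : ℕ → ℝ} {m n : ℕ} (hpos : ∀ j, m ≤ j → j ≤ n → 0 ≤ a j)
    {r x : ℝ} (hr : 0 ≤ r) (hrx : r ≤ x) :
    (∑ j ∈ Icc m n, a j * r ^ (j - m)) * x ^ m ≤ ∑ j ∈ Icc m n, a j * x ^ j := by
  rw [sum_mul]
  refine sum_le_sum fun j hj => ?_
  obtain ⟨hmj, hjn⟩ := mem_Icc.mp hj
  have ha := hpos j hmj hjn
  have hx : 0 ≤ x := hr.trans hrx
  calc a j * r ^ (j - m) * x ^ m ≤ a j * x ^ (j - m) * x ^ m := by gcongr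
    _ = a j * x ^ j := by rw [mul_assoc, ← pow_add, Nat.sub_add_cancel hmj]

lemma abs_sum_range_mul_pow_lt {a : ℕ → ℝ} {m : ℕ} {b x : ℝ} (hb : 0 < b) (hx : 0 < x)
    (ha : ∀ j < m, |a j| ≤ b * (x / 2) ^ (m - j)) :
    |∑ j ∈ range m, a j * x ^ j| < b * x ^ m := by
  have hterm : ∀ j ∈ range m, |a j * x ^ j| ≤ b * (x / 2) ^ m * 2 ^ j := fun j hj => by
    have hjm := mem_range.mp hj
    have hsplit : (x / 2) ^ m * 2 ^ j = (x / 2) ^ (m - j) * x ^ j := by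
      rw [← Nat.sub_add_cancel hjm.le, pow_add, Nat.add_sub_cancel, mul_assoc, ← mul_pow,
        div_mul_cancel₀ x two_ne_zero]
    rw [abs_mul, abs_pow, abs_of_pos hx, mul_assoc, hsplit, ← mul_assoc]
    gcongr
    exact ha j hjm
  have hgeom : ∑ j ∈ range m, (2 : ℝ) ^ j = 2 ^ m - 1 := by
    rw [geom_sum_eq (by norm_num)]
    norm_num
  calc |∑ j ∈ range m, a j * x ^ j| ≤ ∑ j ∈ range m, |a j * x ^ j| := abs_sum_le_sum_abs _ _
    _ ≤ ∑ j ∈ range m, b * (x / 2) ^ m * 2 ^ j := sum_le_sum hterm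
    _ = b * (x / 2) ^ m * (2 ^ m - 1) := by rw [← mul_sum, hgeom]
    _ < b * (x / 2) ^ m * 2 ^ m := by gcongr; linarith
    _ = b * x ^ m := by rw [mul_assoc, ← mul_pow, div_mul_cancel₀ x two_ne_zero]

theorem stmt19 (n m : ℕ) (a : ℕ → ℝ) (han : 0 < a n) (hm1 : 1 ≤ m) (hmn : m ≤ n)
    (hpos : ∀ j, m ≤ j → j ≤ n → 0 ≤ a j) (r : ℝ) (hr : 0 < r) (b c ν : ℝ)
    (hb : b = ∑ j ∈ Finset.Icc m n, a j * r ^ (j - m))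
    (hc : c = (Finset.Icc 1 m).sup' (Finset.nonempty_Icc.mpr hm1)
      (fun i => (|a (m - i)| / b) ^ ((1 : ℝ) / (i : ℝ))))
    (hν : ν = max r (2 * c)) :
    ∀ x : ℝ, ν < x → 0 < ∑ j ∈ Finset.range (n + 1), a j * x ^ j := by
  intro x hx
  obtain ⟨hrx, hcx⟩ : r < x ∧ 2 * c < x := max_lt_iff.mp (hν ▸ hx)
  have hx0 : 0 < x := hr.trans hrx
  have hb0 : 0 < b := hb ▸ sum_pos' (fun j hj => mul_nonneg
    (hpos j (mem_Icc.mp hj).1 (mem_Icc.mp hj).2) (pow_nonneg hr.le _))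
    ⟨n, mem_Icc.mpr ⟨hmn, le_rfl⟩, mul_pos han (pow_pos hr _)⟩
  have hlow : ∀ j < m, |a j| ≤ b * (x / 2) ^ (m - j) := fun j hjm => by
    have hi : m - j ∈ Icc 1 m := mem_Icc.mpr ⟨by omega, by omega⟩
    have hroot := hc ▸ le_sup' (fun i => (|a (m - i)| / b) ^ ((1 : ℝ) / (i : ℝ))) hi
    rw [Nat.sub_sub_self hjm.le] at hroot
    have hc0 : 0 ≤ c := (Real.rpow_nonneg (div_nonneg (abs_nonneg _) hb0.le) _).trans hroot
    calc |a j| ≤ b * c ^ (m - j) :=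
          le_mul_pow_of_div_rpow_one_div_le (abs_nonneg _) hb0 (by omega) hroot
      _ ≤ b * (x / 2) ^ (m - j) := by gcongr; linarith
  have htop := hb ▸ mul_pow_le_sum_Icc_mul_pow hpos hr.le hrx.le
  have hbottom := abs_sum_range_mul_pow_lt hb0 hx0 hlow
  rw [sum_range_succ_eq_sum_range_add_sum_Icc _ hmn]
  linarith [neg_abs_le (∑ j ∈ range m, a j * x ^ j)]
end
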